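/- arXiv:2410.16340 — 6 statements merged into one kernel-verified Lean document; each statement's English description precedes it below -/
import Mathlib

section
/- For every fixed θ ∈ ℝ^d and every t > 0, the norm of the OLS stochastic gradient is α-regularly varying: lim_{z→∞} P(‖∇ℓ(θ,x,ε)‖ > t·z) / P(‖∇ℓ(θ,x,ε)‖ > z) = t^{−α}. -/
open MeasureTheory ProbabilityTheory Filter Topology Set

/-!
Write `‖∇ℓ‖ = |a - ε| * ‖x‖` with `a = ⟪x, θ - θ*⟫`, so that `|a| * ‖x‖ ≤ c` almost surely.
Conditionally on `x`, the event `‖∇ℓ‖ > z` lies between `|ε| > (z + c) / ‖x‖` and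
`|ε| > (z - c) / ‖x‖`, so independence and the Pareto tail of `ε` give, for large `z`,
`E‖x‖^α (z + c)^(-α) ≤ P(‖∇ℓ‖ > z) ≤ E‖x‖^α (z - c)^(-α)`, with `E‖x‖^α > 0` since `x ≠ 0` a.s.
Ratios of such shifted power laws at `t z` and `z` tend to `t^(-α)`.
-/

theorem Real.div_rpow_neg {w r : ℝ} (hw : 0 ≤ w) (hr : 0 ≤ r) (α : ℝ) :
    (w / r) ^ (-α) = r ^ α * w ^ (-α) := by
  rw [Real.div_rpow hw hr, Real.rpow_neg hr, div_inv_eq_mul, mul_comm]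

theorem tendsto_affine_rpow_div_affine_rpow {t : ℝ} (ht : 0 < t) (a b p : ℝ) :
    Tendsto (fun z : ℝ => (t * z + a) ^ p / (z + b) ^ p) atTop (𝓝 (t ^ p)) := by
  have hnum : Tendsto (fun z : ℝ => t * z + a) atTop atTop :=
    tendsto_atTop_add_const_right _ a (tendsto_id.const_mul_atTop ht)
  have hden : Tendsto (fun z : ℝ => z + b) atTop atTop :=
    tendsto_atTop_add_const_right _ b tendsto_id
  have hquot : Tendsto (fun z : ℝ => (t * z + a) / (z + b)) atTop (𝓝 t) := by
    have hinv := tendsto_inv_atTop_zero (𝕜 := ℝ)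
    have h := (tendsto_const_nhds (x := t)).add (hinv.const_mul a) |>.div
      ((tendsto_const_nhds (x := (1 : ℝ))).add (hinv.const_mul b)) (by norm_num)
    simp only [mul_zero, add_zero, div_one] at h
    refine h.congr' ?_
    filter_upwards [eventually_gt_atTop 0, hden.eventually_gt_atTop 0] with z hz hzb
    simp only [Pi.div_apply]
    field_simp
  refine (hquot.rpow_const (Or.inl ht.ne')).congr' ?_
  filter_upwards [hnum.eventually_ge_atTop 0, hden.eventually_ge_atTop 0] with z hz1 hz2
  exact Real.div_rpow hz1 hz2 p

theorem tendsto_div_comp_mul_of_rpow_bounds {F : ℝ → ℝ} {L a b p t : ℝ} (hL : 0 < L)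
    (ht : 0 < t) (hlow : ∀ᶠ z in atTop, L * (z + a) ^ p ≤ F z)
    (hup : ∀ᶠ z in atTop, F z ≤ L * (z + b) ^ p) :
    Tendsto (fun z => F (t * z) / F z) atTop (𝓝 (t ^ p)) := by
  have hmul : Tendsto (fun z : ℝ => t * z) atTop atTop := tendsto_id.const_mul_atTop ht
  have hpos : ∀ᶠ z : ℝ in atTop, 0 < L * (z + a) ^ p ∧ 0 < L * (z + b) ^ p := by
    filter_upwards [eventually_gt_atTop (-a), eventually_gt_atTop (-b)] with z ha hb
    exact ⟨mul_pos hL (Real.rpow_pos_of_pos (by linarith) p),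
      mul_pos hL (Real.rpow_pos_of_pos (by linarith) p)⟩
  have hlim (c d : ℝ) :
      Tendsto (fun z => L * (t * z + c) ^ p / (L * (z + d) ^ p)) atTop (𝓝 (t ^ p)) :=
    (tendsto_affine_rpow_div_affine_rpow ht c d p).congr fun z =>
      (mul_div_mul_left _ _ hL.ne').symm
  refine tendsto_of_tendsto_of_tendsto_of_le_of_le' (hlim a b) (hlim b a) ?_ ?_
  · filter_upwards [hlow, hup, hpos, hmul.eventually hlow, hmul.eventually hpos]
      with z hlz huz ⟨haz, _⟩ hltz ⟨hatz, _⟩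
    exact div_le_div₀ (hatz.le.trans hltz) hltz (haz.trans_le hlz) huz
  · filter_upwards [hlow, hpos, hmul.eventually hup, hmul.eventually hpos]
      with z hlz ⟨haz, _⟩ hutz ⟨_, hbtz⟩
    exact div_le_div₀ hbtz.le hutz haz hlz

theorem ProbabilityTheory.IndepFun.measure_prodMk_mem_eq_lintegral {Ω β γ : Type*}
    [MeasurableSpace Ω] [MeasurableSpace β] [MeasurableSpace γ] {P : Measure Ω}
    [IsFiniteMeasure P] {X : Ω → β} {Y : Ω → γ} (h : IndepFun X Y P) (hX : Measurable X)
    (hY : Measurable Y) {S : Set (β × γ)} (hS : MeasurableSet S) :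
    P {ω | (X ω, Y ω) ∈ S} = ∫⁻ ω', P {ω | (X ω', Y ω) ∈ S} ∂P := by
  have hlaw := (indepFun_iff_map_prod_eq_prod_map_map hX.aemeasurable hY.aemeasurable).mp h
  calc P {ω | (X ω, Y ω) ∈ S} = P.map (fun ω => (X ω, Y ω)) S :=
        (Measure.map_apply (hX.prodMk hY) hS).symm
    _ = ∫⁻ b, P.map Y (Prod.mk b ⁻¹' S) ∂P.map X := by rw [hlaw, Measure.prod_apply hS]
    _ = ∫⁻ ω', P {ω | (X ω', Y ω) ∈ S} ∂P := by
        rw [lintegral_map (measurable_measure_prodMk_left hS) hX]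
        simp_rw [Measure.map_apply hY (measurable_prodMk_left hS)]
        rfl

def HasParetoTail {Ω : Type*} [MeasurableSpace Ω] (P : Measure Ω) (ε : Ω → ℝ) (α : ℝ) : Prop :=
  ∀ s : ℝ, 1 ≤ s → P {ω | s < |ε ω|} = ENNReal.ofReal (s ^ (-α))

namespace HasParetoTail

variable {Ω : Type*} [MeasurableSpace Ω] {P : Measure Ω} {ε : Ω → ℝ} {α a c r z : ℝ}

theorem measure_lt_abs_sub_mul_le (hε : HasParetoTail P ε α) (hα : 0 ≤ α) (hr : 0 ≤ r)
    (hc : |a| * r ≤ c) (hz : c + r ≤ z) :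
    P {ω | z < |a - ε ω| * r} ≤ ENNReal.ofReal (r ^ α * (z - c) ^ (-α)) := by
  rcases hr.eq_or_lt with rfl | hr
  · simp only [mul_zero, add_zero] at hc hz
    simp [show ¬z < 0 by linarith]
  have hsub : {ω | z < |a - ε ω| * r} ⊆ {ω | z / r - |a| < |ε ω|} := fun ω hω => by
    have := (div_lt_iff₀ hr).mpr hω
    have := abs_sub a (ε ω)
    simp only [mem_ofPred_eq]; linarith
  have hzr : 0 ≤ z - |a| * r := by linarith
  have hshift : z / r - |a| = (z - |a| * r) / r := by field_simp
  calc P {ω | z < |a - ε ω| * r} ≤ P {ω | z / r - |a| < |ε ω|} := measure_mono hsub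
    _ = ENNReal.ofReal (r ^ α * (z - |a| * r) ^ (-α)) := by
        rw [hε _ (by rw [hshift, le_div_iff₀ hr]; linarith), hshift,
          Real.div_rpow_neg hzr hr.le]
    _ ≤ ENNReal.ofReal (r ^ α * (z - c) ^ (-α)) :=
        ENNReal.ofReal_le_ofReal <| mul_le_mul_of_nonneg_left
          (Real.rpow_le_rpow_of_nonpos (by linarith) (by linarith) (by linarith)) (by positivity)

theorem le_measure_lt_abs_sub_mul (hε : HasParetoTail P ε α) (hα : 0 < α) (hr : 0 ≤ r)
    (hc : |a| * r ≤ c) (hz : r ≤ z) :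
    ENNReal.ofReal (r ^ α * (z + c) ^ (-α)) ≤ P {ω | z < |a - ε ω| * r} := by
  rcases hr.eq_or_lt with rfl | hr
  · simp [Real.zero_rpow hα.ne']
  have hsup : {ω | z / r + |a| < |ε ω|} ⊆ {ω | z < |a - ε ω| * r} := fun ω hω => by
    have := abs_sub_abs_le_abs_sub (ε ω) a
    rw [abs_sub_comm] at this
    simp only [mem_ofPred_eq] at hω ⊢
    exact (div_lt_iff₀ hr).mp (by linarith)
  have har : 0 ≤ |a| * r := by positivity
  have hzr : 0 < z + |a| * r := by linarith
  have hshift : z / r + |a| = (z + |a| * r) / r := by field_simp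
  calc ENNReal.ofReal (r ^ α * (z + c) ^ (-α))
      ≤ ENNReal.ofReal (r ^ α * (z + |a| * r) ^ (-α)) :=
        ENNReal.ofReal_le_ofReal <| mul_le_mul_of_nonneg_left
          (Real.rpow_le_rpow_of_nonpos hzr (by linarith) (by linarith)) (by positivity)
    _ = P {ω | z / r + |a| < |ε ω|} := by
        rw [hε _ (by rw [hshift, le_div_iff₀ hr]; linarith), hshift,
          Real.div_rpow_neg hzr.le hr.le]
    _ ≤ P {ω | z < |a - ε ω| * r} := measure_mono hsup

end HasParetoTail

section TailOfProduct

variable {Ω : Type*} [MeasurableSpace Ω] {P : Measure Ω} {A R ε : Ω → ℝ} {α c M t z : ℝ}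

theorem measure_lt_abs_sub_mul_eq_lintegral [IsFiniteMeasure P] (hA : Measurable A)
    (hR : Measurable R) (hεm : Measurable ε) (hind : IndepFun (fun ω => (A ω, R ω)) ε P) (z : ℝ) :
    P {ω | z < |A ω - ε ω| * R ω} = ∫⁻ ω', P {ω | z < |A ω' - ε ω| * R ω'} ∂P :=
  hind.measure_prodMk_mem_eq_lintegral (hA.prodMk hR) hεm (S := {p | z < |p.1.1 - p.2| * p.1.2})
    (measurableSet_lt measurable_const (by fun_prop))

theorem measure_lt_abs_sub_mul_le_lintegral_mul [IsFiniteMeasure P] (hA : Measurable A)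
    (hR : Measurable R) (hεm : Measurable ε) (hind : IndepFun (fun ω => (A ω, R ω)) ε P)
    (hε : HasParetoTail P ε α) (hα : 0 ≤ α) (hRM : ∀ᵐ ω ∂P, 0 ≤ R ω ∧ R ω ≤ M)
    (hAR : ∀ᵐ ω ∂P, |A ω| * R ω ≤ c) (hz : c + M ≤ z) :
    P {ω | z < |A ω - ε ω| * R ω} ≤
      (∫⁻ ω, ENNReal.ofReal (R ω ^ α) ∂P) * ENNReal.ofReal ((z - c) ^ (-α)) := by
  rw [measure_lt_abs_sub_mul_eq_lintegral hA hR hεm hind, ← lintegral_mul_const' _ _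
    ENNReal.ofReal_ne_top]
  refine lintegral_mono_ae ?_
  filter_upwards [hRM, hAR] with ω ⟨hR0, hRM⟩ hAR
  rw [← ENNReal.ofReal_mul (by positivity)]
  exact hε.measure_lt_abs_sub_mul_le hα hR0 hAR (by linarith)

theorem lintegral_mul_le_measure_lt_abs_sub_mul [IsFiniteMeasure P] (hA : Measurable A)
    (hR : Measurable R) (hεm : Measurable ε) (hind : IndepFun (fun ω => (A ω, R ω)) ε P)
    (hε : HasParetoTail P ε α) (hα : 0 < α) (hRM : ∀ᵐ ω ∂P, 0 ≤ R ω ∧ R ω ≤ M)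
    (hAR : ∀ᵐ ω ∂P, |A ω| * R ω ≤ c) (hz : M ≤ z) :
    (∫⁻ ω, ENNReal.ofReal (R ω ^ α) ∂P) * ENNReal.ofReal ((z + c) ^ (-α)) ≤
      P {ω | z < |A ω - ε ω| * R ω} := by
  rw [measure_lt_abs_sub_mul_eq_lintegral hA hR hεm hind, ← lintegral_mul_const' _ _
    ENNReal.ofReal_ne_top]
  refine lintegral_mono_ae ?_
  filter_upwards [hRM, hAR] with ω ⟨hR0, hRM⟩ hAR
  rw [← ENNReal.ofReal_mul (by positivity)]
  exact hε.le_measure_lt_abs_sub_mul hα hR0 hAR (by linarith)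

theorem lintegral_ofReal_rpow_ne_top [IsFiniteMeasure P] (hα : 0 ≤ α)
    (hRM : ∀ᵐ ω ∂P, 0 ≤ R ω ∧ R ω ≤ M) : ∫⁻ ω, ENNReal.ofReal (R ω ^ α) ∂P ≠ ⊤ := by
  refine ne_top_of_le_ne_top (ENNReal.mul_ne_top ENNReal.ofReal_ne_top (measure_ne_top P univ))
    (lintegral_mono_ae (g := fun _ => ENNReal.ofReal (M ^ α)) ?_ |>.trans_eq (lintegral_const _))
  filter_upwards [hRM] with ω ⟨hR0, hRM⟩
  exact ENNReal.ofReal_le_ofReal (Real.rpow_le_rpow hR0 hRM hα)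

theorem lintegral_ofReal_rpow_pos (hR : Measurable R) (hRpos : ∃ᵐ ω ∂P, 0 < R ω) :
    0 < ∫⁻ ω, ENNReal.ofReal (R ω ^ α) ∂P := by
  refine pos_iff_ne_zero.mpr fun h => ?_
  rw [lintegral_eq_zero_iff (by fun_prop)] at h
  obtain ⟨ω, hRω, hω⟩ := (hRpos.and_eventually h).exists
  simp only [Pi.zero_apply, ENNReal.ofReal_eq_zero] at hω
  exact (Real.rpow_pos_of_pos hRω α).not_ge hω

theorem tendsto_measure_lt_abs_sub_mul_ratio [IsFiniteMeasure P] (hA : Measurable A)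
    (hR : Measurable R) (hεm : Measurable ε) (hind : IndepFun (fun ω => (A ω, R ω)) ε P)
    (hε : HasParetoTail P ε α) (hα : 0 < α) (hRM : ∀ᵐ ω ∂P, 0 ≤ R ω ∧ R ω ≤ M)
    (hAR : ∀ᵐ ω ∂P, |A ω| * R ω ≤ c) (hRpos : ∃ᵐ ω ∂P, 0 < R ω) (ht : 0 < t) :
    Tendsto (fun z => (P {ω | t * z < |A ω - ε ω| * R ω}).toReal /
      (P {ω | z < |A ω - ε ω| * R ω}).toReal) atTop (𝓝 (t ^ (-α))) := by
  set I := ∫⁻ ω, ENNReal.ofReal (R ω ^ α) ∂P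
  have hL : 0 < I.toReal := ENNReal.toReal_pos (lintegral_ofReal_rpow_pos hR hRpos).ne'
    (lintegral_ofReal_rpow_ne_top hα.le hRM)
  refine tendsto_div_comp_mul_of_rpow_bounds (F := fun z => (P {ω | z < |A ω - ε ω| * R ω}).toReal)
    (a := c) (b := -c) hL ht ?_ ?_
  · filter_upwards [eventually_ge_atTop M, eventually_ge_atTop (-c)] with z hzM hzc
    have := ENNReal.toReal_mono (measure_ne_top P _)
      (lintegral_mul_le_measure_lt_abs_sub_mul hA hR hεm hind hε hα hRM hAR hzM)
    rwa [ENNReal.toReal_mul, ENNReal.toReal_ofReal (Real.rpow_nonneg (by linarith) _)] at this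
  · filter_upwards [eventually_ge_atTop (c + M), eventually_ge_atTop c] with z hzM hzc
    have := ENNReal.toReal_mono
      (ENNReal.mul_ne_top (lintegral_ofReal_rpow_ne_top hα.le hRM) ENNReal.ofReal_ne_top)
      (measure_lt_abs_sub_mul_le_lintegral_mul hA hR hεm hind hε hα.le hRM hAR hzM)
    rwa [ENNReal.toReal_mul, ENNReal.toReal_ofReal (Real.rpow_nonneg (by linarith) _),
      sub_eq_add_neg] at this

end TailOfProduct

theorem ols_norm_regular_varying_general
    {d : ℕ} {Ω : Type*} [MeasurableSpace Ω] (P : Measure Ω) [IsProbabilityMeasure P]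
    (x : Ω → EuclideanSpace ℝ (Fin d)) (ε : Ω → ℝ)
    (hxmeas : Measurable x) (hεmeas : Measurable ε)
    (hindep : IndepFun x ε P)
    (K : Set (EuclideanSpace ℝ (Fin d))) (hK : IsCompact K)
    (hxK : ∀ᵐ ω ∂P, x ω ∈ K)
    (hx0 : P {ω | x ω = 0} = 0)
    (α : ℝ) (hα : α ∈ Set.Ioo (1:ℝ) 2)
    (htail1 : ∀ t : ℝ, 1 ≤ t → (P {ω | |ε ω| > t}).toReal = t ^ (-α))
    (θ θstar : EuclideanSpace ℝ (Fin d)) :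
    ∀ t : ℝ, 0 < t →
      Tendsto (fun z : ℝ =>
          (P {ω | ‖((inner ℝ (x ω) (θ - θstar) : ℝ) - ε ω) • x ω‖ > t * z}).toReal /
          (P {ω | ‖((inner ℝ (x ω) (θ - θstar) : ℝ) - ε ω) • x ω‖ > z}).toReal)
        atTop (𝓝 (t ^ (-α))) := by
  intro t ht
  obtain ⟨M, hM0, hM⟩ := hK.isBounded.exists_pos_norm_le
  have hxM : ∀ᵐ ω ∂P, ‖x ω‖ ≤ M := hxK.mono fun ω hω => hM _ hω
  have hε : HasParetoTail P ε α := fun s hs => by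
    rw [← htail1 s hs, ENNReal.ofReal_toReal (measure_ne_top P _)]
  have hind : IndepFun (fun ω => (inner ℝ (x ω) (θ - θstar), ‖x ω‖)) ε P :=
    hindep.comp (φ := fun v => (inner ℝ v (θ - θstar), ‖v‖)) (by fun_prop) measurable_id
  have hAR : ∀ᵐ ω ∂P, |inner ℝ (x ω) (θ - θstar)| * ‖x ω‖ ≤ M * ‖θ - θstar‖ * M := by
    filter_upwards [hxM] with ω hω
    calc |inner ℝ (x ω) (θ - θstar)| * ‖x ω‖ ≤ ‖x ω‖ * ‖θ - θstar‖ * ‖x ω‖ := by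
          gcongr; exact abs_real_inner_le_norm _ _
      _ ≤ M * ‖θ - θstar‖ * M := by gcongr
  have hxpos : ∃ᵐ ω ∂P, 0 < ‖x ω‖ :=
    (measure_eq_zero_iff_ae_notMem.mp hx0 |>.mono fun ω hω => norm_pos_iff.mpr hω).frequently
  simpa only [norm_smul, Real.norm_eq_abs, gt_iff_lt] using
    tendsto_measure_lt_abs_sub_mul_ratio (by fun_prop) (by fun_prop) hεmeas hind hε
      (by linarith [hα.1]) (hxM.mono fun ω hω => ⟨norm_nonneg _, hω⟩) hAR hxpos ht

/-- For the OLS stochastic gradient `∇ℓ(θ,x,ε) = (⟪x, θ-θ*⟫ - ε) • x`,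
its norm is α-regularly varying:
`lim_{z→∞} P(‖∇ℓ‖ > t z) / P(‖∇ℓ‖ > z) = t^{-α}` for every `t > 0`. -/
theorem ols_norm_regular_varying
    {d : ℕ} {Ω : Type*} [MeasurableSpace Ω] (P : Measure Ω) [IsProbabilityMeasure P]
    (x : Ω → EuclideanSpace ℝ (Fin d)) (ε : Ω → ℝ)
    (hxmeas : Measurable x) (hεmeas : Measurable ε)
    (hindep : IndepFun x ε P)
    (K : Set (EuclideanSpace ℝ (Fin d))) (hK : IsCompact K)
    (hxK : ∀ᵐ ω ∂P, x ω ∈ K)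
    (hx0 : P {ω | x ω = 0} = 0)
    (α : ℝ) (hα : α ∈ Set.Ioo (1:ℝ) 2)
    (htail1 : ∀ t : ℝ, 1 ≤ t → (P {ω | |ε ω| > t}).toReal = t ^ (-α))
    (htail2 : ∀ t : ℝ, 0 ≤ t → t ≤ 1 → (P {ω | |ε ω| > t}).toReal = 1)
    (θ θstar : EuclideanSpace ℝ (Fin d))
    (hpos : ∀ z : ℝ, 0 < P {ω | ‖((inner ℝ (x ω) (θ - θstar) : ℝ) - ε ω) • x ω‖ > z}) :
    ∀ t : ℝ, 0 < t →
      Tendsto (fun z : ℝ =>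
          (P {ω | ‖((inner ℝ (x ω) (θ - θstar) : ℝ) - ε ω) • x ω‖ > t * z}).toReal /
          (P {ω | ‖((inner ℝ (x ω) (θ - θstar) : ℝ) - ε ω) • x ω‖ > z}).toReal)
        atTop (𝓝 (t ^ (-α))) :=
  ols_norm_regular_varying_general P x ε hxmeas hεmeas hindep K hK hxK hx0 α hα htail1 θ θstar
end

section
/- Let d = 1 and θ* > 0, with λ = 0 so that ∇ℓ(θ,x,y) = −σ(yxθ)·yx, and assume μ({1}) > 0. Then: (i) for every θ ≤ 0, lim_{z→∞} P( ∇ℓ(θ,x,y)/|∇ℓ(θ,x,y)| = −1 | |∇ℓ(θ,x,y)| > z ) = 1; and (ii) for every θ > 0, lim_{z→∞} P(|∇ℓ(θ,x,y)| > z) / P(|x| > z) = 0, i.e. the stochastic gradient is no longer heavy-tailed relative to the covariate. -/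
/-!
Under the logistic model misclassified samples are exponentially rare far out:
`P(yx ≤ 0, |x| > z) ≤ e^{-zθ*} P(|x| > z)`, since `P(y = 1 | x) ≤ e^{xθ*}` on `x < -z` and
`P(y = -1 | x) ≤ e^{-xθ*}` on `x > z`. The gradient is `-σ(yxθ)·yx`, with `|∇ℓ| ≤ |x|`.

For `θ > 0` a correctly classified sample has `|∇ℓ| = σ(u)·u/θ ≤ e^{-1}/θ` with `u = yxθ ≥ 0`,
so beyond that level the gradient tail consists of misclassified samples only and is
`O(e^{-zθ*} P(|x| > z))`.

For `θ ≤ 0` a correctly classified sample has `σ(yxθ) ≥ 1/2` and gradient direction `-1`, so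
`P(|∇ℓ| > z) ≥ (1 - e^{-2zθ*}) P(|x| > 2z)`. Regular variation makes `P(|x| > 2z)` comparable
to `P(|x| > z)`, hence the misclassified share `e^{-zθ*} P(|x| > z)` of the gradient tail
vanishes relative to the whole.
-/

open MeasureTheory ProbabilityTheory Filter Topology Set

noncomputable def logisticSigma (u : ℝ) : ℝ := Real.exp (-u) / (1 + Real.exp (-u))

lemma logisticSigma_pos (u : ℝ) : 0 < logisticSigma u := by
  unfold logisticSigma; positivity

lemma logisticSigma_le_one (u : ℝ) : logisticSigma u ≤ 1 :=
  div_le_one_of_le₀ (by linarith) (by positivity)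

lemma logisticSigma_le_exp_neg (u : ℝ) : logisticSigma u ≤ Real.exp (-u) :=
  div_le_self (Real.exp_pos _).le (by linarith [Real.exp_pos (-u)])

lemma one_div_one_add_exp_neg (u : ℝ) : 1 / (1 + Real.exp (-u)) = logisticSigma (-u) := by
  unfold logisticSigma
  rw [neg_neg, Real.exp_neg]
  field_simp
  ring

lemma logisticSigma_add_logisticSigma_neg (u : ℝ) : logisticSigma u + logisticSigma (-u) = 1 := by
  rw [← one_div_one_add_exp_neg]
  unfold logisticSigma
  field_simp
  ring

lemma one_half_le_logisticSigma {u : ℝ} (hu : u ≤ 0) : 1 / 2 ≤ logisticSigma u := by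
  unfold logisticSigma
  rw [div_le_div_iff₀ (by norm_num) (by positivity)]
  linarith [Real.one_le_exp (neg_nonneg.2 hu)]

lemma mul_logisticSigma_le (u : ℝ) : u * logisticSigma u ≤ Real.exp (-1) :=
  calc u * logisticSigma u ≤ Real.exp (u - 1) * Real.exp (-u) :=
        mul_le_mul (by linarith [Real.add_one_le_exp (u - 1)]) (logisticSigma_le_exp_neg u)
          (logisticSigma_pos u).le (Real.exp_pos _).le
    _ = Real.exp (-1) := by rw [← Real.exp_add]; ring_nf

lemma div_abs_eq_neg_one_iff {a : ℝ} : a / |a| = -1 ↔ a < 0 := by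
  rcases lt_trichotomy a 0 with h | h | h
  · simp [abs_of_neg h, h, h.ne]
  · simp [h]
  · simp [abs_of_pos h, h.ne', h.not_gt]; norm_num

lemma abs_mul_of_eq_one_or_eq_neg_one {y : ℝ} (hy : y = 1 ∨ y = -1) (x : ℝ) : |y * x| = |x| := by
  rcases hy with rfl | rfl <;> simp

lemma measureReal_mono_ae {Ω : Type*} [MeasurableSpace Ω] {μ : Measure Ω} [IsFiniteMeasure μ]
    {s t : Set Ω} (h : s ≤ᵐ[μ] t) : μ.real s ≤ μ.real t :=
  ENNReal.toReal_mono (measure_ne_top _ _) (measure_mono_ae h)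

lemma tendsto_exp_neg_mul_atTop {c : ℝ} (hc : 0 < c) :
    Tendsto (fun z => Real.exp (-(z * c))) atTop (𝓝 0) :=
  Real.tendsto_exp_neg_atTop_nhds_zero.comp (tendsto_id.atTop_mul_const hc)

lemma eventually_measureReal_two_mul_lt_abs_pos {Ω : Type*} [MeasurableSpace Ω]
    {P : Measure Ω} {x : Ω → ℝ} {c : ℝ} (hc : c ≠ 0)
    (hdoubling : Tendsto (fun z => P.real {ω | 2 * z < |x ω|} / P.real {ω | z < |x ω|}) atTop
      (𝓝 c)) :
    ∀ᶠ z in atTop, 0 < P.real {ω | 2 * z < |x ω|} :=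
  (hdoubling.eventually_ne hc).mono fun _ hratio =>
    measureReal_nonneg.lt_of_ne (div_ne_zero_iff.1 hratio).1.symm

section LogisticGrad

noncomputable def logisticGrad (θ x y : ℝ) : ℝ := -(logisticSigma (y * x * θ)) * (y * x)

variable {θ x y : ℝ}

lemma abs_logisticGrad : |logisticGrad θ x y| = logisticSigma (y * x * θ) * |y * x| := by
  rw [logisticGrad, abs_mul, abs_neg, abs_of_pos (logisticSigma_pos _)]

lemma logisticGrad_neg_iff : logisticGrad θ x y < 0 ↔ 0 < y * x := by
  rw [logisticGrad, neg_mul, neg_lt_zero]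
  exact mul_pos_iff_of_pos_left (logisticSigma_pos _)

lemma abs_logisticGrad_le : |logisticGrad θ x y| ≤ |y * x| := by
  rw [abs_logisticGrad]
  exact mul_le_of_le_one_left (abs_nonneg _) (logisticSigma_le_one _)

lemma abs_logisticGrad_le_of_margin_nonneg (hθ : 0 < θ) (hm : 0 ≤ y * x) :
    |logisticGrad θ x y| ≤ Real.exp (-1) / θ := by
  rw [abs_logisticGrad, abs_of_nonneg hm, le_div_iff₀ hθ]
  calc logisticSigma (y * x * θ) * (y * x) * θ = y * x * θ * logisticSigma (y * x * θ) := by ring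
    _ ≤ Real.exp (-1) := mul_logisticSigma_le _

lemma abs_mul_le_two_mul_abs_logisticGrad (hθ : θ ≤ 0) (hm : 0 ≤ y * x) :
    |y * x| ≤ 2 * |logisticGrad θ x y| := by
  rw [abs_logisticGrad]
  have := one_half_le_logisticSigma (mul_nonpos_of_nonneg_of_nonpos hm hθ)
  nlinarith [abs_nonneg (y * x)]

end LogisticGrad

/-- `P(y = 1 | x) = 1 / (1 + e^{-xθ*})`, stated through its integrals over the events `{x ∈ S}`. -/
structure IsLogisticModel {Ω : Type*} [MeasurableSpace Ω] (P : Measure Ω) (x y : Ω → ℝ)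
    (θstar : ℝ) : Prop where
  measurable_covariate : Measurable x
  measurable_label : Measurable y
  label_eq : ∀ᵐ ω ∂P, y ω = 1 ∨ y ω = -1
  measureReal_label_eq_one_inter : ∀ S : Set ℝ, MeasurableSet S →
    P.real ({ω | y ω = 1} ∩ x ⁻¹' S) = ∫ ω in x ⁻¹' S, 1 / (1 + Real.exp (-(x ω * θstar))) ∂P

namespace IsLogisticModel

variable {Ω : Type*} [MeasurableSpace Ω] {P : Measure Ω} {x y : Ω → ℝ} {θstar : ℝ}

lemma measurableSet_margin_nonpos (h : IsLogisticModel P x y θstar) :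
    MeasurableSet {ω | y ω * x ω ≤ 0} :=
  measurableSet_le (h.measurable_label.mul h.measurable_covariate) measurable_const

variable [IsFiniteMeasure P]

lemma measureReal_label_eq_one_inter_lt_le (h : IsLogisticModel P x y θstar) (hθstar : 0 < θstar)
    (z : ℝ) :
    P.real ({ω | y ω = 1} ∩ x ⁻¹' Iio (-z))
      ≤ Real.exp (-(z * θstar)) * P.real (x ⁻¹' Iio (-z)) := by
  rw [h.measureReal_label_eq_one_inter _ measurableSet_Iio]
  refine (Real.le_norm_self _).trans (norm_setIntegral_le_of_norm_le_const (measure_lt_top _ _) ?_)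
  intro ω (hω : x ω < -z)
  rw [Real.norm_eq_abs, one_div_one_add_exp_neg, abs_of_pos (logisticSigma_pos _)]
  calc logisticSigma (-(x ω * θstar)) ≤ Real.exp (x ω * θstar) := by
        simpa using logisticSigma_le_exp_neg (-(x ω * θstar))
    _ ≤ Real.exp (-(z * θstar)) := Real.exp_le_exp.2 (by nlinarith)

lemma measureReal_label_eq_neg_one_inter_gt_le (h : IsLogisticModel P x y θstar)
    (hθstar : 0 < θstar) (z : ℝ) :
    P.real ({ω | y ω = -1} ∩ x ⁻¹' Ioi z) ≤ Real.exp (-(z * θstar)) * P.real (x ⁻¹' Ioi z) := by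
  set A := x ⁻¹' Ioi z
  have hA : MeasurableSet A := h.measurable_covariate measurableSet_Ioi
  have hp : Integrable (fun ω => 1 / (1 + Real.exp (-(x ω * θstar)))) P := by
    have hx := h.measurable_covariate
    refine Integrable.of_bound (by fun_prop : Measurable _).aestronglyMeasurable 1
      (ae_of_all _ fun ω => ?_)
    rw [one_div_one_add_exp_neg, Real.norm_eq_abs, abs_of_pos (logisticSigma_pos _)]
    exact logisticSigma_le_one _
  have hdisj : Disjoint ({ω | y ω = -1} ∩ A) ({ω | y ω = 1} ∩ A) :=
    Disjoint.inter_left _ (Disjoint.inter_right _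
      (disjoint_left.2 fun ω (h1 : y ω = -1) (h2 : y ω = 1) => by norm_num [h1] at h2))
  have hsplit : P.real ({ω | y ω = -1} ∩ A) + P.real ({ω | y ω = 1} ∩ A) ≤ P.real A := by
    rw [← measureReal_union hdisj
      ((measurableSet_eq_fun h.measurable_label measurable_const).inter hA)]
    exact measureReal_mono (union_subset inter_subset_right inter_subset_right)
  have hcompl : P.real A - P.real ({ω | y ω = 1} ∩ A)
      = ∫ ω in A, logisticSigma (x ω * θstar) ∂P := by
    have hone : ∫ _ in A, (1 : ℝ) ∂P = P.real A := by simp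
    rw [h.measureReal_label_eq_one_inter _ measurableSet_Ioi, ← hone,
      ← integral_sub (integrable_const 1) hp.integrableOn]
    congr 1 with ω
    rw [one_div_one_add_exp_neg, ← logisticSigma_add_logisticSigma_neg (x ω * θstar)]
    ring
  have hbound : ∫ ω in A, logisticSigma (x ω * θstar) ∂P ≤ Real.exp (-(z * θstar)) * P.real A := by
    refine (Real.le_norm_self _).trans
      (norm_setIntegral_le_of_norm_le_const (measure_lt_top _ _) ?_)
    intro ω (hω : z < x ω)
    rw [Real.norm_eq_abs, abs_of_pos (logisticSigma_pos _)]
    exact (logisticSigma_le_exp_neg _).trans (Real.exp_le_exp.2 (by nlinarith))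
  linarith

lemma measureReal_abs_gt_inter_margin_nonpos_le (h : IsLogisticModel P x y θstar)
    (hθstar : 0 < θstar) {z : ℝ} (hz : 0 ≤ z) :
    P.real ({ω | z < |x ω|} ∩ {ω | y ω * x ω ≤ 0})
      ≤ Real.exp (-(z * θstar)) * P.real {ω | z < |x ω|} := by
  have hsub : ({ω | z < |x ω|} ∩ {ω | y ω * x ω ≤ 0} : Set Ω)
      ≤ᵐ[P] (({ω | y ω = 1} ∩ x ⁻¹' Iio (-z)) ∪ ({ω | y ω = -1} ∩ x ⁻¹' Ioi z) : Set Ω) := by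
    filter_upwards [h.label_eq] with ω hy ⟨(hx : z < |x ω|), (hm : y ω * x ω ≤ 0)⟩
    rcases hy with hy | hy
    · rw [hy, one_mul] at hm
      rw [abs_of_nonpos hm] at hx
      exact Or.inl ⟨hy, show x ω < -z by linarith⟩
    · rw [hy, neg_one_mul, neg_nonpos] at hm
      rw [abs_of_nonneg hm] at hx
      exact Or.inr ⟨hy, hx⟩
  have hdisj : Disjoint (x ⁻¹' Iio (-z)) (x ⁻¹' Ioi z) :=
    disjoint_left.2 fun ω (h1 : x ω < -z) (h2 : z < x ω) => by linarith
  have htail : P.real (x ⁻¹' Iio (-z)) + P.real (x ⁻¹' Ioi z) = P.real {ω | z < |x ω|} := by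
    rw [← measureReal_union hdisj (h.measurable_covariate measurableSet_Ioi)]
    congr 1 with ω
    change x ω < -z ∨ z < x ω ↔ z < |x ω|
    rw [lt_abs, lt_neg, or_comm]
  calc _ ≤ _ := measureReal_mono_ae hsub
    _ ≤ _ := measureReal_union_le _ _
    _ ≤ Real.exp (-(z * θstar)) * P.real (x ⁻¹' Iio (-z))
          + Real.exp (-(z * θstar)) * P.real (x ⁻¹' Ioi z) :=
        add_le_add (h.measureReal_label_eq_one_inter_lt_le hθstar z)
          (h.measureReal_label_eq_neg_one_inter_gt_le hθstar z)
    _ = _ := by rw [← mul_add, htail]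

lemma measureReal_abs_logisticGrad_gt_inter_margin_nonpos_le (h : IsLogisticModel P x y θstar)
    (hθstar : 0 < θstar) (θ : ℝ) {z : ℝ} (hz : 0 ≤ z) :
    P.real ({ω | z < |logisticGrad θ (x ω) (y ω)|} ∩ {ω | y ω * x ω ≤ 0})
      ≤ Real.exp (-(z * θstar)) * P.real {ω | z < |x ω|} := by
  refine le_trans (measureReal_mono_ae ?_) (h.measureReal_abs_gt_inter_margin_nonpos_le hθstar hz)
  filter_upwards [h.label_eq] with ω hy ⟨(hg : z < |logisticGrad θ (x ω) (y ω)|), hm⟩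
  exact ⟨hg.trans_le (abs_logisticGrad_le.trans (abs_mul_of_eq_one_or_eq_neg_one hy _).le), hm⟩

lemma one_sub_exp_mul_measureReal_le_measureReal_abs_logisticGrad_gt
    (h : IsLogisticModel P x y θstar) (hθstar : 0 < θstar) {θ : ℝ} (hθ : θ ≤ 0) {z : ℝ}
    (hz : 0 ≤ z) :
    (1 - Real.exp (-(2 * z * θstar))) * P.real {ω | 2 * z < |x ω|}
      ≤ P.real {ω | z < |logisticGrad θ (x ω) (y ω)|} := by
  have hmisaligned := h.measureReal_abs_gt_inter_margin_nonpos_le hθstar (by positivity : 0 ≤ 2 * z)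
  have haligned : P.real ({ω | 2 * z < |x ω|} \ {ω | y ω * x ω ≤ 0})
      ≤ P.real {ω | z < |logisticGrad θ (x ω) (y ω)|} := by
    refine measureReal_mono_ae ?_
    filter_upwards [h.label_eq] with ω hy ⟨(hx : 2 * z < |x ω|), (hm : ¬y ω * x ω ≤ 0)⟩
    have := abs_mul_le_two_mul_abs_logisticGrad hθ (not_le.1 hm).le
    rw [abs_mul_of_eq_one_or_eq_neg_one hy] at this
    show z < |logisticGrad θ (x ω) (y ω)|
    linarith
  have hsplit := measureReal_inter_add_sdiff (μ := P) (s := {ω | 2 * z < |x ω|})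
    h.measurableSet_margin_nonpos
  linarith

lemma eventually_measureReal_abs_logisticGrad_gt_pos (h : IsLogisticModel P x y θstar)
    (hθstar : 0 < θstar) {θ : ℝ} (hθ : θ ≤ 0) {c : ℝ} (hc : c ≠ 0)
    (hdoubling : Tendsto (fun z => P.real {ω | 2 * z < |x ω|} / P.real {ω | z < |x ω|}) atTop
      (𝓝 c)) :
    ∀ᶠ z in atTop, 0 < P.real {ω | z < |logisticGrad θ (x ω) (y ω)|} := by
  filter_upwards [eventually_measureReal_two_mul_lt_abs_pos hc hdoubling, eventually_gt_atTop 0]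
    with z htail hz
  have hexp : Real.exp (-(2 * z * θstar)) < 1 := Real.exp_lt_one_iff.2 (by nlinarith)
  exact (mul_pos (sub_pos.2 hexp) htail).trans_le
    (h.one_sub_exp_mul_measureReal_le_measureReal_abs_logisticGrad_gt hθstar hθ hz.le)

lemma tendsto_measureReal_abs_logisticGrad_gt_inter_margin_nonpos_div
    (h : IsLogisticModel P x y θstar) (hθstar : 0 < θstar) {θ : ℝ} (hθ : θ ≤ 0) {c : ℝ}
    (hc : c ≠ 0)
    (hdoubling : Tendsto (fun z => P.real {ω | 2 * z < |x ω|} / P.real {ω | z < |x ω|}) atTop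
      (𝓝 c)) :
    Tendsto (fun z => P.real ({ω | z < |logisticGrad θ (x ω) (y ω)|} ∩ {ω | y ω * x ω ≤ 0})
      / P.real {ω | z < |logisticGrad θ (x ω) (y ω)|}) atTop (𝓝 0) := by
  have hexp := tendsto_exp_neg_mul_atTop hθstar
  have hexp₂ : Tendsto (fun z => Real.exp (-(2 * z * θstar))) atTop (𝓝 0) :=
    hexp.comp (tendsto_id.const_mul_atTop two_pos)
  have hinv : Tendsto (fun z => P.real {ω | z < |x ω|} / P.real {ω | 2 * z < |x ω|}) atTop
      (𝓝 c⁻¹) :=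
    (hdoubling.inv₀ hc).congr fun z => inv_div _ _
  have hbound : Tendsto (fun z => Real.exp (-(z * θstar)) / (1 - Real.exp (-(2 * z * θstar)))
      * (P.real {ω | z < |x ω|} / P.real {ω | 2 * z < |x ω|})) atTop (𝓝 0) := by
    have := (hexp.div ((tendsto_const_nhds (x := (1 : ℝ))).sub hexp₂) (by norm_num)).mul hinv
    rwa [zero_div, zero_mul] at this
  refine tendsto_of_tendsto_of_tendsto_of_le_of_le' tendsto_const_nhds hbound
    (Eventually.of_forall fun z => div_nonneg measureReal_nonneg measureReal_nonneg) ?_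
  filter_upwards [eventually_measureReal_two_mul_lt_abs_pos hc hdoubling, eventually_gt_atTop 0]
    with z htail hz
  have hexp₂_lt : Real.exp (-(2 * z * θstar)) < 1 := Real.exp_lt_one_iff.2 (by nlinarith)
  calc _ ≤ Real.exp (-(z * θstar)) * P.real {ω | z < |x ω|}
        / ((1 - Real.exp (-(2 * z * θstar))) * P.real {ω | 2 * z < |x ω|}) :=
      div_le_div₀ (mul_nonneg (Real.exp_pos _).le measureReal_nonneg)
        (h.measureReal_abs_logisticGrad_gt_inter_margin_nonpos_le hθstar θ hz.le)
        (mul_pos (sub_pos.2 hexp₂_lt) htail)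
        (h.one_sub_exp_mul_measureReal_le_measureReal_abs_logisticGrad_gt hθstar hθ hz.le)
    _ = _ := mul_div_mul_comm _ _ _ _

theorem tendsto_measureReal_logisticGrad_sign_eq_neg_one (h : IsLogisticModel P x y θstar)
    (hθstar : 0 < θstar) {θ : ℝ} (hθ : θ ≤ 0) {c : ℝ} (hc : c ≠ 0)
    (hdoubling : Tendsto (fun z => P.real {ω | 2 * z < |x ω|} / P.real {ω | z < |x ω|}) atTop
      (𝓝 c)) :
    Tendsto (fun z => P.real ({ω | logisticGrad θ (x ω) (y ω) / |logisticGrad θ (x ω) (y ω)| = -1}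
        ∩ {ω | z < |logisticGrad θ (x ω) (y ω)|})
      / P.real {ω | z < |logisticGrad θ (x ω) (y ω)|}) atTop (𝓝 1) := by
  have hset : ∀ z : ℝ, {ω | logisticGrad θ (x ω) (y ω) / |logisticGrad θ (x ω) (y ω)| = -1}
      ∩ {ω | z < |logisticGrad θ (x ω) (y ω)|}
      = {ω | z < |logisticGrad θ (x ω) (y ω)|} \ {ω | y ω * x ω ≤ 0} := fun z => by
    ext ω
    change logisticGrad θ (x ω) (y ω) / |logisticGrad θ (x ω) (y ω)| = -1
        ∧ z < |logisticGrad θ (x ω) (y ω)| ↔ z < |logisticGrad θ (x ω) (y ω)| ∧ ¬y ω * x ω ≤ 0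
    rw [div_abs_eq_neg_one_iff, logisticGrad_neg_iff, not_le, and_comm]
  have hlim := (tendsto_const_nhds (x := (1 : ℝ))).sub
    (h.tendsto_measureReal_abs_logisticGrad_gt_inter_margin_nonpos_div hθstar hθ hc hdoubling)
  rw [sub_zero] at hlim
  refine hlim.congr' ?_
  filter_upwards [h.eventually_measureReal_abs_logisticGrad_gt_pos hθstar hθ hc hdoubling]
    with z hpos
  have hsplit := measureReal_inter_add_sdiff (μ := P)
    (s := {ω | z < |logisticGrad θ (x ω) (y ω)|}) h.measurableSet_margin_nonpos
  rw [hset, eq_div_iff hpos.ne', sub_mul, div_mul_cancel₀ _ hpos.ne', one_mul]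
  linarith

theorem tendsto_measureReal_abs_logisticGrad_gt_div_of_pos (h : IsLogisticModel P x y θstar)
    (hθstar : 0 < θstar) {θ : ℝ} (hθ : 0 < θ) :
    Tendsto (fun z => P.real {ω | z < |logisticGrad θ (x ω) (y ω)|} / P.real {ω | z < |x ω|})
      atTop (𝓝 0) := by
  refine tendsto_of_tendsto_of_tendsto_of_le_of_le' tendsto_const_nhds
    (tendsto_exp_neg_mul_atTop hθstar)
    (Eventually.of_forall fun z => div_nonneg measureReal_nonneg measureReal_nonneg) ?_
  filter_upwards [eventually_gt_atTop (Real.exp (-1) / θ)] with z hz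
  have hz₀ : 0 ≤ z := (div_nonneg (Real.exp_pos _).le hθ.le).trans hz.le
  have hmisaligned : {ω | z < |logisticGrad θ (x ω) (y ω)|}
      ⊆ {ω | z < |logisticGrad θ (x ω) (y ω)|} ∩ {ω | y ω * x ω ≤ 0} :=
    fun ω (hω : z < |logisticGrad θ (x ω) (y ω)|) => ⟨hω, not_lt.1 fun (hm : 0 < y ω * x ω) =>
      (hz.trans hω).not_ge (abs_logisticGrad_le_of_margin_nonneg hθ hm.le)⟩
  exact div_le_of_le_mul₀ measureReal_nonneg (Real.exp_pos _).le <|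
    (measureReal_mono hmisaligned).trans
      (h.measureReal_abs_logisticGrad_gt_inter_margin_nonpos_le hθstar θ hz₀)

end IsLogisticModel

theorem logistic_one_dim_degenerate_general
    {Ω : Type*} [MeasurableSpace Ω] (P : Measure Ω) [IsProbabilityMeasure P]
    (x : Ω → ℝ) (y : Ω → ℝ)
    (hxmeas : Measurable x) (hymeas : Measurable y)
    (hy : ∀ᵐ ω ∂P, y ω = 1 ∨ y ω = -1)
    (θstar : ℝ) (hθstar : 0 < θstar)
    (hcond : ∀ S : Set ℝ, MeasurableSet S →
        (P ({ω | y ω = 1} ∩ x ⁻¹' S)).toReal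
          = ∫ ω in x ⁻¹' S, 1 / (1 + Real.exp (-(x ω * θstar))) ∂P)
    (α : ℝ)
    (hreg : ∀ t : ℝ, 0 < t →
        Tendsto (fun z : ℝ => (P {ω | |x ω| > t * z}).toReal / (P {ω | |x ω| > z}).toReal)
          atTop (𝓝 (t ^ (-α)))) :
    (∀ θ : ℝ, θ ≤ 0 →
      Tendsto (fun z : ℝ =>
          (P ({ω | (-(logisticSigma (y ω * x ω * θ)) * (y ω * x ω)) /
                |(-(logisticSigma (y ω * x ω * θ)) * (y ω * x ω))| = -1}
              ∩ {ω | |(-(logisticSigma (y ω * x ω * θ)) * (y ω * x ω))| > z})).toReal /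
            (P {ω | |(-(logisticSigma (y ω * x ω * θ)) * (y ω * x ω))| > z}).toReal)
        atTop (𝓝 1)) ∧
    (∀ θ : ℝ, 0 < θ →
      Tendsto (fun z : ℝ =>
          (P {ω | |(-(logisticSigma (y ω * x ω * θ)) * (y ω * x ω))| > z}).toReal /
            (P {ω | |x ω| > z}).toReal)
        atTop (𝓝 0)) := by
  have hmodel : IsLogisticModel P x y θstar := ⟨hxmeas, hymeas, hy, hcond⟩
  have hdoubling_ne : (2 : ℝ) ^ (-α) ≠ 0 := (Real.rpow_pos_of_pos two_pos _).ne'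
  exact ⟨fun θ hθ => hmodel.tendsto_measureReal_logisticGrad_sign_eq_neg_one hθstar hθ
      hdoubling_ne (hreg 2 two_pos),
    fun θ hθ => hmodel.tendsto_measureReal_abs_logisticGrad_gt_div_of_pos hθstar hθ⟩

/-- one-dimensional logistic regression with `θ* > 0` and `λ = 0`, so that
`∇ℓ(θ,x,y) = -σ(yxθ)·yx`. (i) For `θ ≤ 0` the conditional probability that the gradient
direction equals `-1` given `|∇ℓ| > z` tends to `1`; (ii) for `θ > 0` the gradient is no
longer heavy-tailed relative to the covariate: `P(|∇ℓ| > z)/P(|x| > z) → 0`. -/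
theorem logistic_one_dim_degenerate
    {Ω : Type*} [MeasurableSpace Ω] (P : Measure Ω) [IsProbabilityMeasure P]
    (x : Ω → ℝ) (y : Ω → ℝ)
    (hxmeas : Measurable x) (hymeas : Measurable y)
    (hy : ∀ᵐ ω ∂P, y ω = 1 ∨ y ω = -1)
    (θstar : ℝ) (hθstar : 0 < θstar)
    (hcond : ∀ S : Set ℝ, MeasurableSet S →
        (P ({ω | y ω = 1} ∩ x ⁻¹' S)).toReal
          = ∫ ω in x ⁻¹' S, 1 / (1 + Real.exp (-(x ω * θstar))) ∂P)
    (α : ℝ) (hα : α ∈ Set.Ioo (1:ℝ) 2)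
    (hxpos : ∀ z : ℝ, 0 < P {ω | |x ω| > z})
    (hreg : ∀ t : ℝ, 0 < t →
        Tendsto (fun z : ℝ => (P {ω | |x ω| > t * z}).toReal / (P {ω | |x ω| > z}).toReal)
          atTop (𝓝 (t ^ (-α))))
    (μ1 μneg : ℝ) (hμ1nonneg : 0 ≤ μ1) (hμnegnonneg : 0 ≤ μneg) (hsum : μ1 + μneg = 1)
    (hang1 : Tendsto (fun z : ℝ =>
        (P ({ω | x ω / |x ω| = 1} ∩ {ω | |x ω| > z})).toReal / (P {ω | |x ω| > z}).toReal)
        atTop (𝓝 μ1))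
    (hangneg : Tendsto (fun z : ℝ =>
        (P ({ω | x ω / |x ω| = -1} ∩ {ω | |x ω| > z})).toReal / (P {ω | |x ω| > z}).toReal)
        atTop (𝓝 μneg))
    (hμ1pos : 0 < μ1) :
    (∀ θ : ℝ, θ ≤ 0 →
      Tendsto (fun z : ℝ =>
          (P ({ω | (-(logisticSigma (y ω * x ω * θ)) * (y ω * x ω)) /
                |(-(logisticSigma (y ω * x ω * θ)) * (y ω * x ω))| = -1}
              ∩ {ω | |(-(logisticSigma (y ω * x ω * θ)) * (y ω * x ω))| > z})).toReal /
            (P {ω | |(-(logisticSigma (y ω * x ω * θ)) * (y ω * x ω))| > z}).toReal)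
        atTop (𝓝 1)) ∧
    (∀ θ : ℝ, 0 < θ →
      Tendsto (fun z : ℝ =>
          (P {ω | |(-(logisticSigma (y ω * x ω * θ)) * (y ω * x ω))| > z}).toReal /
            (P {ω | |x ω| > z}).toReal)
        atTop (𝓝 0)) :=
  logistic_one_dim_degenerate_general P x y hxmeas hymeas hy θstar hθstar hcond α hreg
end

section
/- Let a ∈ (0,1), β > 0, C ≥ 0, let (C_n)_{n≥1} be a real sequence with C_n → c > 0, and let (A_n)_{n≥1} be a sequence of positive reals satisfying A_{n+1} = (1 − C_n·n^{−a})·A_n + C·n^{−a−β} for all n ≥ 1. Then sup_{n≥1} n^{β}·A_n < ∞. -/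
/-!
With `B n = n ^ β * A n` the recursion reads
`B (n+1) = (1 + 1/n) ^ β * ((1 - C_n n^{-a}) B n + C n^{-a})`.
Since `(1 + 1/n) ^ β = 1 + O(1/n)` and `1/n = o(n^{-a})` for `a < 1`, eventually
`B (n+1) ≤ (1 - t_n) B n + t_n L` with `t_n = (c/4) n^{-a} ∈ [0, 1]` and `L = 4 · 2^β C / c`.
The right side is a convex combination, so `B (n+1) ≤ max (B n) L` eventually, and `B` is bounded.
-/

open Filter Topology

lemma bddAbove_range_of_eventually_le_max {u : ℕ → ℝ} {L : ℝ}
    (h : ∀ᶠ n in atTop, u (n + 1) ≤ max (u n) L) : BddAbove (Set.range u) := by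
  obtain ⟨N, hN⟩ := eventually_atTop.mp h
  refine IsBoundedUnder.bddAbove_range (isBoundedUnder_of_eventually_le (a := max (u N) L) ?_)
  filter_upwards [eventually_ge_atTop N] with n hn
  induction n, hn using Nat.le_induction with
  | base => exact le_max_left _ _
  | succ n hn ih => exact (hN n hn).trans (max_le ih (le_max_right _ _))

lemma le_max_of_le_one_sub_mul_add_mul {u v t L : ℝ} (ht₀ : 0 ≤ t) (ht₁ : t ≤ 1)
    (h : v ≤ (1 - t) * u + t * L) : v ≤ max u L :=
  h.trans (Convex.combo_le_max u L (sub_nonneg.mpr ht₁) ht₀ (sub_add_cancel 1 t))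

lemma one_add_rpow_le_one_add_two_mul {y β : ℝ} (hy : 0 ≤ y) (hβ : 0 ≤ β) (hβy : β * y ≤ 1) :
    (1 + y) ^ β ≤ 1 + 2 * (β * y) := by
  have hexp : |Real.exp (β * y) - 1| ≤ 2 * |β * y| :=
    Real.abs_exp_sub_one_le (by rwa [abs_of_nonneg (by positivity)])
  calc (1 + y) ^ β ≤ Real.exp y ^ β := by
        gcongr
        linarith [Real.add_one_le_exp y]
    _ = Real.exp (β * y) := by rw [← Real.exp_mul, mul_comm]
    _ ≤ 1 + 2 * (β * y) := by
        rw [abs_of_nonneg (by positivity : 0 ≤ β * y)] at hexp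
        linarith [le_abs_self (Real.exp (β * y) - 1)]

lemma one_add_rpow_mul_one_sub_le {y β s : ℝ} (hy : 0 ≤ y) (hβ : 0 ≤ β) (hβy : β * y ≤ 1)
    (hs : 0 ≤ s) : (1 + y) ^ β * (1 - s) ≤ 1 - s + 2 * (β * y) := by
  rcases le_total 0 (1 - s) with hpos | hneg
  · have hgrowth := one_add_rpow_le_one_add_two_mul hy hβ hβy
    nlinarith [mul_le_mul_of_nonneg_right hgrowth hpos, mul_nonneg hs (mul_nonneg hβ hy)]
  · have hone : 1 ≤ (1 + y) ^ β := Real.one_le_rpow (le_add_of_nonneg_right hy) hβ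
    nlinarith [mul_le_mul_of_nonpos_right hone hneg]

lemma add_one_rpow_mul_recursion {x : ℝ} (hx : 0 < x) (a β s A C : ℝ) :
    (x + 1) ^ β * ((1 - s) * A + C * x ^ (-a - β))
      = (1 + x⁻¹) ^ β * ((1 - s) * (x ^ β * A) + C * x ^ (-a)) := by
  have hsplit : (x + 1) ^ β = (1 + x⁻¹) ^ β * x ^ β := by
    rw [← Real.mul_rpow (by positivity) hx.le, add_mul, inv_mul_cancel₀ hx.ne', one_mul, add_comm]
  have hpow : x ^ β * x ^ (-a - β) = x ^ (-a) := by
    rw [← Real.rpow_add hx]; ring_nf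
  rw [hsplit]
  linear_combination (1 + x⁻¹) ^ β * C * hpow

lemma add_one_rpow_mul_recursion_le {x a β s t A A' C : ℝ} (hx : 1 ≤ x) (hβ : 0 ≤ β)
    (hC : 0 ≤ C) (hA : 0 ≤ A)
    (hrec : A' = (1 - s * x ^ (-a)) * A + C * x ^ (-a - β))
    (hfactor : (1 + x⁻¹) ^ β * (1 - s * x ^ (-a)) ≤ 1 - t * x ^ (-a)) :
    (x + 1) ^ β * A' ≤ (1 - t * x ^ (-a)) * (x ^ β * A) + 2 ^ β * C * x ^ (-a) := by
  have hx₀ : 0 < x := zero_lt_one.trans_le hx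
  have hgrowth : (1 + x⁻¹) ^ β ≤ 2 ^ β := by
    gcongr
    linarith [inv_le_one_of_one_le₀ hx]
  calc (x + 1) ^ β * A'
      = (1 + x⁻¹) ^ β * (1 - s * x ^ (-a)) * (x ^ β * A) + (1 + x⁻¹) ^ β * C * x ^ (-a) := by
        rw [hrec, add_one_rpow_mul_recursion hx₀]
        ring
    _ ≤ (1 - t * x ^ (-a)) * (x ^ β * A) + 2 ^ β * C * x ^ (-a) := by
        gcongr

lemma eventually_one_add_inv_rpow_mul_le {a β c : ℝ} {s : ℕ → ℝ} (ha : a < 1) (hβ : 0 ≤ β)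
    (hc : 0 < c) (hs : Tendsto s atTop (𝓝 c)) :
    ∀ᶠ n : ℕ in atTop,
      (1 + (n : ℝ)⁻¹) ^ β * (1 - s n * (n : ℝ) ^ (-a)) ≤ 1 - c / 4 * (n : ℝ) ^ (-a) := by
  have hn_inv : Tendsto (fun n : ℕ => (n : ℝ)⁻¹) atTop (𝓝 0) :=
    tendsto_inv_atTop_zero.comp tendsto_natCast_atTop_atTop
  have hn_ratio : Tendsto (fun n : ℕ => (n : ℝ) ^ (a - 1)) atTop (𝓝 0) := by
    simpa only [Function.comp_def, neg_sub] using
      (tendsto_rpow_neg_atTop (sub_pos.mpr ha)).comp tendsto_natCast_atTop_atTop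
  have hs_low : ∀ᶠ n in atTop, c / 2 ≤ s n := hs.eventually (eventually_ge_nhds (by linarith))
  have hβn : ∀ᶠ n : ℕ in atTop, β * (n : ℝ)⁻¹ ≤ 1 := by
    simpa using (hn_inv.const_mul β).eventually (eventually_le_nhds (by norm_num : β * 0 < 1))
  have hratio : ∀ᶠ n : ℕ in atTop, 2 * β * (n : ℝ) ^ (a - 1) ≤ c / 4 := by
    simpa using (hn_ratio.const_mul (2 * β)).eventually
      (eventually_le_nhds (by linarith : 2 * β * 0 < c / 4))
  filter_upwards [hs_low, hβn, hratio, eventually_gt_atTop 0] with n hsn hβn hratio hn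
  have hn : (0 : ℝ) < n := Nat.cast_pos.mpr hn
  set x := (n : ℝ) ^ (-a)
  have hx : 0 < x := Real.rpow_pos_of_pos hn _
  have hinv : 2 * (β * (n : ℝ)⁻¹) ≤ c / 4 * x := by
    have : (n : ℝ)⁻¹ = (n : ℝ) ^ (a - 1) * x := by
      rw [← Real.rpow_add hn, show a - 1 + -a = -1 by ring, Real.rpow_neg_one]
    rw [this, ← mul_assoc, ← mul_assoc]
    exact mul_le_mul_of_nonneg_right hratio hx.le
  have hsx : c / 2 * x ≤ s n * x := mul_le_mul_of_nonneg_right hsn hx.le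
  have hg := one_add_rpow_mul_one_sub_le (inv_nonneg.mpr hn.le) hβ hβn
    ((by positivity : 0 ≤ c / 2 * x).trans hsx)
  linarith

/-- Fabian's recursion lemma, `a ∈ (0,1)`: if `A_{n+1} = (1 - C_n n^{-a}) A_n
+ C n^{-a-β}` with `A_n > 0` and `C_n → c > 0`, then `sup_n n^β A_n < ∞`. -/
theorem fabian_recursion_sublinear
    (a β C : ℝ) (ha : a ∈ Set.Ioo (0:ℝ) 1) (hβ : 0 < β) (hC : 0 ≤ C)
    (Cseq : ℕ → ℝ) (c : ℝ) (hc : 0 < c)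
    (hCseq : Tendsto Cseq atTop (𝓝 c))
    (A : ℕ → ℝ) (hApos : ∀ n : ℕ, 1 ≤ n → 0 < A n)
    (hrec : ∀ n : ℕ, 1 ≤ n →
      A (n+1) = (1 - Cseq n * (n:ℝ) ^ (-a)) * A n + C * (n:ℝ) ^ (-a - β)) :
    ∃ B : ℝ, ∀ n : ℕ, 1 ≤ n → (n:ℝ) ^ β * A n ≤ B := by
  set B : ℕ → ℝ := fun n => (n : ℝ) ^ β * A n
  have ht : Tendsto (fun n : ℕ => c / 4 * (n : ℝ) ^ (-a)) atTop (𝓝 0) := by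
    simpa using ((tendsto_rpow_neg_atTop ha.1).comp tendsto_natCast_atTop_atTop).const_mul (c / 4)
  have hstep : ∀ᶠ n in atTop, B (n + 1) ≤ max (B n) (2 ^ β * C / (c / 4)) := by
    filter_upwards [eventually_one_add_inv_rpow_mul_le ha.2 hβ.le hc hCseq,
      ht.eventually (eventually_le_nhds one_pos), eventually_ge_atTop 1] with n hfactor ht₁ hn
    have hn₁ : (1 : ℝ) ≤ n := Nat.one_le_cast.mpr hn
    refine le_max_of_le_one_sub_mul_add_mul (by positivity) ht₁ ?_
    calc B (n + 1)
        ≤ (1 - c / 4 * (n : ℝ) ^ (-a)) * B n + 2 ^ β * C * (n : ℝ) ^ (-a) := by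
          simpa only [B, Nat.cast_succ] using add_one_rpow_mul_recursion_le hn₁ hβ.le hC
            (hApos n hn).le (hrec n hn) hfactor
      _ = (1 - c / 4 * (n : ℝ) ^ (-a)) * B n
            + c / 4 * (n : ℝ) ^ (-a) * (2 ^ β * C / (c / 4)) := by
          field_simp
  obtain ⟨M, hM⟩ := bddAbove_range_of_eventually_le_max hstep
  exact ⟨M, fun n _ => hM ⟨n, rfl⟩⟩
end

section
/- Let β > 0, C ≥ 0, let (C_n)_{n≥1} be a real sequence with C_n → c where c > β > 0, and let (A_n)_{n≥1} be a sequence of positive reals satisfying A_{n+1} = (1 − C_n·n^{−1})·A_n + C·n^{−1−β} for all n ≥ 1. Then sup_{n≥1} n^{β}·A_n < ∞. -/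
/-! Put `B n = n ^ β * A n`. Since `(n + 1) ^ β = n ^ β (1 + 1/n) ^ β`, the recursion becomes
`B (n + 1) = (1 - a n / n) B n + k n / n` with `a n → c - β > 0` (because `n ((1 + 1/n) ^ β - 1) → β`,
the derivative of `x ^ β` at `1`) and `k n → C`. For large `n` the weight `a n / n` lies in `[0, 1]`
and `k n ≤ a n L` with `L = C / (c - β) + 1`, so `B (n + 1)` is at most a convex combination of
`B n` and `L`; hence `B` never rises above `max (B N) L` after some `N`. -/

open Filter Topology

theorem bddAbove_range_of_le_convexComb {u t : ℕ → ℝ} {L : ℝ}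
    (h : ∀ᶠ n in atTop, t n ∈ Set.Icc 0 1 ∧ u (n + 1) ≤ (1 - t n) * u n + t n * L) :
    BddAbove (Set.range u) := by
  obtain ⟨N, hN⟩ := eventually_atTop.1 h
  have hbound : ∀ n ≥ N, u n ≤ max (u N) L := by
    intro n hn
    induction n, hn using Nat.le_induction with
    | base => exact le_max_left _ _
    | succ n hn ih =>
      obtain ⟨⟨ht₀, ht₁⟩, hstep⟩ := hN n hn
      calc u (n + 1) ≤ (1 - t n) * u n + t n * L := hstep
        _ ≤ (1 - t n) * max (u N) L + t n * max (u N) L :=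
          add_le_add (mul_le_mul_of_nonneg_left ih (by linarith))
            (mul_le_mul_of_nonneg_left (le_max_right _ _) ht₀)
        _ = max (u N) L := by ring
  exact (isBoundedUnder_of_eventually_le (eventually_atTop.2 ⟨N, hbound⟩)).bddAbove_range

theorem bddAbove_range_of_le_one_sub_div_mul_add_div {u a k : ℕ → ℝ} {α κ : ℝ} (hα : 0 < α)
    (ha : Tendsto a atTop (𝓝 α)) (hk : Tendsto k atTop (𝓝 κ))
    (hu : ∀ᶠ n : ℕ in atTop, u (n + 1) ≤ (1 - a n / n) * u n + k n / n) :
    BddAbove (Set.range u) := by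
  refine bddAbove_range_of_le_convexComb (t := fun n => a n / n) (L := κ / α + 1) ?_
  have ha_pos : ∀ᶠ n in atTop, 0 < a n := ha.eventually_const_lt hα
  have ha_lt : ∀ᶠ n in atTop, a n < α + 1 := ha.eventually_lt_const (lt_add_one α)
  have hratio : ∀ᶠ n in atTop, k n / a n < κ / α + 1 :=
    (hk.div ha hα.ne').eventually_lt_const (lt_add_one _)
  filter_upwards [hu, ha_pos, ha_lt, hratio,
    tendsto_natCast_atTop_atTop.eventually_ge_atTop (α + 1)]
    with n hstep ha_pos ha_lt hratio hn
  have ht₀ : 0 ≤ a n / n := div_nonneg ha_pos.le n.cast_nonneg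
  refine ⟨⟨ht₀, div_le_one_of_le₀ (by linarith) n.cast_nonneg⟩, hstep.trans ?_⟩
  calc (1 - a n / n) * u n + k n / n = (1 - a n / n) * u n + a n / n * (k n / a n) := by
        field_simp
    _ ≤ (1 - a n / n) * u n + a n / n * (κ / α + 1) := by
        gcongr

theorem tendsto_natCast_mul_one_add_inv_rpow_sub_one (β : ℝ) :
    Tendsto (fun n : ℕ => (n : ℝ) * ((1 + (n : ℝ)⁻¹) ^ β - 1)) atTop (𝓝 β) := by
  have hderiv : HasDerivAt (fun x : ℝ => x ^ β) β 1 := by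
    simpa using Real.hasDerivAt_rpow_const (x := 1) (p := β) (Or.inl one_ne_zero)
  have hinv : Tendsto (fun n : ℕ => (n : ℝ)⁻¹) atTop (𝓝[>] 0) :=
    tendsto_inv_atTop_nhdsGT_zero.comp tendsto_natCast_atTop_atTop
  simpa [Function.comp_def] using hderiv.tendsto_slope_zero_right.comp hinv

theorem tendsto_one_add_natCast_inv_rpow (β : ℝ) :
    Tendsto (fun n : ℕ => (1 + (n : ℝ)⁻¹) ^ β) atTop (𝓝 1) := by
  have hinv : Tendsto (fun n : ℕ => (n : ℝ)⁻¹) atTop (𝓝 0) :=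
    tendsto_inv_atTop_zero.comp tendsto_natCast_atTop_atTop
  simpa using (tendsto_const_nhds (x := (1 : ℝ)) |>.add hinv).rpow_const (p := β) (by norm_num)

theorem add_one_rpow_mul_eq {x β c C y z : ℝ} (hx : 0 < x)
    (h : z = (1 - c * x⁻¹) * y + C * x ^ (-1 - β)) :
    (x + 1) ^ β * z = (1 - (c * (1 + x⁻¹) ^ β - x * ((1 + x⁻¹) ^ β - 1)) / x) * (x ^ β * y)
      + C * (1 + x⁻¹) ^ β / x := by
  have hsplit : (x + 1) ^ β = x ^ β * (1 + x⁻¹) ^ β := by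
    rw [← Real.mul_rpow hx.le (by positivity), mul_add, mul_inv_cancel₀ hx.ne', mul_one]
  have hpow : x ^ (-1 - β) = x⁻¹ / x ^ β := by
    rw [sub_eq_add_neg, Real.rpow_add hx, Real.rpow_neg_one, Real.rpow_neg hx.le, div_eq_mul_inv]
  rw [hsplit, h, hpow]
  have : 0 < x ^ β := Real.rpow_pos_of_pos hx β
  field_simp
  ring

theorem fabian_recursion_linear_general
    (β C : ℝ)
    (Cseq : ℕ → ℝ) (c : ℝ) (hcβ : β < c)
    (hCseq : Tendsto Cseq atTop (𝓝 c))
    (A : ℕ → ℝ)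
    (hrec : ∀ n : ℕ, 1 ≤ n →
      A (n+1) = (1 - Cseq n * (n:ℝ)⁻¹) * A n + C * (n:ℝ) ^ (-1 - β)) :
    ∃ B : ℝ, ∀ n : ℕ, 1 ≤ n → (n:ℝ) ^ β * A n ≤ B := by
  have hfactor := tendsto_one_add_natCast_inv_rpow β
  have ha : Tendsto (fun n : ℕ => Cseq n * (1 + (n : ℝ)⁻¹) ^ β
      - n * ((1 + (n : ℝ)⁻¹) ^ β - 1)) atTop (𝓝 (c - β)) := by
    simpa using (hCseq.mul hfactor).sub (tendsto_natCast_mul_one_add_inv_rpow_sub_one β)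
  have hk : Tendsto (fun n : ℕ => C * (1 + (n : ℝ)⁻¹) ^ β) atTop (𝓝 C) := by
    simpa using hfactor.const_mul C
  obtain ⟨B, hB⟩ := bddAbove_range_of_le_one_sub_div_mul_add_div
    (u := fun n : ℕ => (n : ℝ) ^ β * A n) (sub_pos.2 hcβ) ha hk <| by
      filter_upwards [eventually_ge_atTop 1] with n hn
      push_cast
      exact (add_one_rpow_mul_eq (by exact_mod_cast hn) (hrec n hn)).le
  exact ⟨B, fun n _ => hB ⟨n, rfl⟩⟩

/-- Fabian's recursion lemma, case `a = 1`: if `A_{n+1} = (1 - C_n n^{-1}) A_n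
+ C n^{-1-β}` with `A_n > 0` and `C_n → c` where `c > β > 0`, then `sup_n n^β A_n < ∞`. -/
theorem fabian_recursion_linear
    (β C : ℝ) (hβ : 0 < β) (hC : 0 ≤ C)
    (Cseq : ℕ → ℝ) (c : ℝ) (hcβ : β < c)
    (hCseq : Tendsto Cseq atTop (𝓝 c))
    (A : ℕ → ℝ) (hApos : ∀ n : ℕ, 1 ≤ n → 0 < A n)
    (hrec : ∀ n : ℕ, 1 ≤ n →
      A (n+1) = (1 - Cseq n * (n:ℝ)⁻¹) * A n + C * (n:ℝ) ^ (-1 - β)) :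
    ∃ B : ℝ, ∀ n : ℕ, 1 ≤ n → (n:ℝ) ^ β * A n ≤ B :=
  fabian_recursion_linear_general β C Cseq c hcβ hCseq A hrec
end

section
/- Let α ∈ (1,2), let G be an ℝ^d-valued random vector whose norm has tail P(‖G‖ > x) = b0(x)·x^{−α} for all x > 0, where b0 : (0,∞) → (0,∞) is differentiable with lim_{x→∞} x·b0'(x)/b0(x) = 0, and assume x ↦ P(‖G‖ > x) is continuous and strictly decreasing to 0. For each n ≥ 1 let a_n > 0 be defined by n·P(‖G‖ > a_n) = 1. Then lim_{t→∞} sup_{n≥1} (n/a_n)·E[ ‖G‖·1{‖G‖ > t·a_n} ] = 0; i.e., the rescaled measures μ_n(·) = n·P(G/a_n ∈ ·) are uniformly integrable in n. -/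
/-!
Potter's bound: since `x b₀'(x) / b₀(x) → 0`, for any `δ > 0` the function `x ↦ b₀(x) x^{-δ}` is
eventually nonincreasing, so with `γ = δ - α < -1` the tail `T(x) = P(‖G‖ > x)` satisfies
`T(y) ≤ T(x) (y/x)^γ` for `X ≤ x ≤ y`. The layer-cake formula
`E[‖G‖; ‖G‖ > u] = u T(u) + ∫_u^∞ T(s) ds` then gives `E[‖G‖; ‖G‖ > u] ≤ γ/(γ+1) · u T(u)`
for `u ≥ X`.
With `u = t aₙ` and `n T(aₙ) = 1` this bounds the rescaled truncated mean by `γ/(γ+1) · t^{γ+1}`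
uniformly over the `n` with `aₙ ≥ X`; the remaining `n` satisfy `n T(X) ≤ n T(aₙ) = 1`, so they are
finitely many, and for each of them the truncated mean tends to `0` as `t → ∞`.
-/

open MeasureTheory Filter Topology Set

theorem tendsto_const_mul_rpow_atTop_nhds_zero (c : ℝ) {γ : ℝ} (hγ : γ < 0) :
    Tendsto (fun t : ℝ => c * t ^ γ) atTop (𝓝 0) := by
  simpa using (tendsto_rpow_neg_atTop (y := -γ) (by linarith)).const_mul c

theorem antitoneOn_mul_rpow_neg_of_mul_deriv_le {b : ℝ → ℝ} {δ X : ℝ} (hX : 0 < X)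
    (hdiff : ∀ x, X ≤ x → DifferentiableAt ℝ b x)
    (hb : ∀ x, X ≤ x → x * deriv b x ≤ δ * b x) :
    AntitoneOn (fun x => b x * x ^ (-δ)) (Ici X) := by
  have hderiv : ∀ x, X ≤ x → HasDerivAt (fun x => b x * x ^ (-δ))
      (x ^ (-δ - 1) * (x * deriv b x - δ * b x)) x := by
    intro x hx
    have hx0 : 0 < x := hX.trans_le hx
    refine ((hdiff x hx).hasDerivAt.mul
      (Real.hasDerivAt_rpow_const (p := -δ) (Or.inl hx0.ne'))).congr_deriv ?_
    rw [Real.rpow_sub hx0, Real.rpow_one]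
    field_simp
    ring
  refine antitoneOn_of_deriv_nonpos (convex_Ici X)
    (fun x hx => (hderiv x hx).continuousAt.continuousWithinAt) ?_ ?_
  · rw [interior_Ici]
    exact fun x hx => (hderiv x (le_of_lt hx)).differentiableAt.differentiableWithinAt
  · rw [interior_Ici]
    intro x hx
    rw [(hderiv x (le_of_lt hx)).deriv]
    exact mul_nonpos_of_nonneg_of_nonpos (Real.rpow_nonneg (hX.trans hx).le _)
      (sub_nonpos.2 (hb x (le_of_lt hx)))

theorem exists_antitoneOn_mul_rpow_neg {b : ℝ → ℝ} {δ : ℝ} (hδ : 0 < δ)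
    (hpos : ∀ x, 0 < x → 0 < b x) (hdiff : ∀ x, 0 < x → DifferentiableAt ℝ b x)
    (hslow : Tendsto (fun x => x * deriv b x / b x) atTop (𝓝 0)) :
    ∃ X > 0, AntitoneOn (fun x => b x * x ^ (-δ)) (Ici X) := by
  obtain ⟨X, hX⟩ := eventually_atTop.1 (hslow.eventually_le_const hδ)
  have hX1 : (0 : ℝ) < max X 1 := lt_max_of_lt_right one_pos
  refine ⟨max X 1, hX1, antitoneOn_mul_rpow_neg_of_mul_deriv_le hX1
    (fun x hx => hdiff x (hX1.trans_le hx)) fun x hx => ?_⟩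
  have hbx := hpos x (hX1.trans_le hx)
  rw [← div_le_iff₀ hbx]
  exact hX x ((le_max_left X 1).trans hx)

theorem AntitoneOn.le_mul_rpow {g : ℝ → ℝ} {γ X x y : ℝ}
    (h : AntitoneOn (fun s => g s * s ^ (-γ)) (Ici X)) (hx0 : 0 < x) (hx : X ≤ x) (hxy : x ≤ y) :
    g y ≤ g x * x ^ (-γ) * y ^ γ := by
  have hy : 0 < y := hx0.trans_le hxy
  calc g y = g y * y ^ (-γ) * y ^ γ := by
        rw [Real.rpow_neg hy.le, mul_assoc, inv_mul_cancel₀ (Real.rpow_pos_of_pos hy γ).ne',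
          mul_one]
    _ ≤ g x * x ^ (-γ) * y ^ γ :=
        mul_le_mul_of_nonneg_right (h hx (hx.trans hxy) hxy) (Real.rpow_nonneg hy.le γ)

theorem AntitoneOn.mul_rpow_neg_sub {b g : ℝ → ℝ} {α δ X : ℝ}
    (h : AntitoneOn (fun x => b x * x ^ (-δ)) (Ici X)) (hX : 0 < X)
    (hg : ∀ x, 0 < x → g x = b x * x ^ (-α)) :
    AntitoneOn (fun x => g x * x ^ (-(δ - α))) (Ici X) := by
  refine h.congr fun x hx => ?_
  have hx0 : 0 < x := hX.trans_le hx
  rw [hg x hx0, mul_assoc, ← Real.rpow_add hx0]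
  ring_nf

section TruncatedMean

variable {Ω : Type*} [MeasurableSpace Ω] {μ : Measure Ω} {f : Ω → ℝ}

theorem setLIntegral_gt_eq_mul_add_lintegral_meas_lt (hf : Measurable f) {u : ℝ} (hu : 0 ≤ u) :
    ∫⁻ ω in {ω | u < f ω}, ENNReal.ofReal (f ω) ∂μ =
      μ {ω | u < f ω} * ENNReal.ofReal u + ∫⁻ t in Ioi u, μ {ω | t < f ω} := by
  set S := {ω | u < f ω}
  have hS : MeasurableSet S := measurableSet_lt measurable_const hf
  have hg : 0 ≤ S.indicator f := indicator_nonneg fun ω hω => hu.trans (le_of_lt hω)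
  have hlow : EqOn (fun t => μ {ω | t < S.indicator f ω}) (fun _ => μ S) (Ioc 0 u) := by
    intro t ht
    refine congrArg μ (ext fun ω => ?_)
    by_cases hω : ω ∈ S
    · simp only [mem_ofPred_eq, indicator_of_mem hω, hω, iff_true]
      exact ht.2.trans_lt hω
    · simp only [mem_ofPred_eq, indicator_of_notMem hω, hω, iff_false, not_lt]
      exact ht.1.le
  have hhigh : EqOn (fun t => μ {ω | t < S.indicator f ω}) (fun t => μ {ω | t < f ω}) (Ioi u) := by
    intro t ht
    refine congrArg μ (ext fun ω => ?_)
    by_cases hω : ω ∈ S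
    · simp only [mem_ofPred_eq, indicator_of_mem hω]
    · simp only [mem_ofPred_eq, indicator_of_notMem hω]
      exact ⟨fun h => absurd h (not_lt.2 (hu.trans (le_of_lt ht))),
        fun h => absurd ((show u < t from ht).trans h) hω⟩
  calc ∫⁻ ω in S, ENNReal.ofReal (f ω) ∂μ = ∫⁻ ω, ENNReal.ofReal (S.indicator f ω) ∂μ := by
        rw [← lintegral_indicator hS]
        congr 1
        ext ω
        by_cases hω : ω ∈ S <;> simp [hω]
    _ = ∫⁻ t in Ioi 0, μ {ω | t < S.indicator f ω} :=
        lintegral_eq_lintegral_meas_lt μ (Eventually.of_forall hg) (hf.indicator hS).aemeasurable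
    _ = (∫⁻ t in Ioc 0 u, μ {ω | t < S.indicator f ω}) +
          ∫⁻ t in Ioi u, μ {ω | t < S.indicator f ω} := by
        rw [← lintegral_union measurableSet_Ioi Ioc_disjoint_Ioi_same, Ioc_union_Ioi_eq_Ioi hu]
    _ = μ S * ENNReal.ofReal u + ∫⁻ t in Ioi u, μ {ω | t < f ω} := by
        rw [setLIntegral_congr_fun measurableSet_Ioc hlow,
          setLIntegral_congr_fun measurableSet_Ioi hhigh, setLIntegral_const, Real.volume_Ioc,
          sub_zero]

theorem setIntegral_gt_le_of_antitoneOn [IsFiniteMeasure μ] (hf : Measurable f) {u γ : ℝ}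
    (hu : 0 < u) (hγ : γ < -1)
    (hanti : AntitoneOn (fun s => μ.real {ω | s < f ω} * s ^ (-γ)) (Ici u)) :
    ∫ ω in {ω | u < f ω}, f ω ∂μ ≤ γ / (γ + 1) * u * μ.real {ω | u < f ω} := by
  set T := μ.real {ω | u < f ω}
  set c := T * u ^ (-γ)
  have hT : 0 ≤ T := measureReal_nonneg
  have hc : 0 ≤ c := mul_nonneg hT (Real.rpow_nonneg hu.le _)
  have htail : ∀ t ∈ Ioi u, μ {ω | t < f ω} ≤ ENNReal.ofReal (c * t ^ γ) := by
    intro t ht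
    rw [← ofReal_measureReal]
    exact ENNReal.ofReal_le_ofReal (hanti.le_mul_rpow hu le_rfl (le_of_lt ht))
  have hI : ∫⁻ t in Ioi u, μ {ω | t < f ω} ≤ ENNReal.ofReal (c * (-u ^ (γ + 1) / (γ + 1))) := by
    calc ∫⁻ t in Ioi u, μ {ω | t < f ω} ≤ ∫⁻ t in Ioi u, ENNReal.ofReal (c * t ^ γ) :=
          setLIntegral_mono (by fun_prop) htail
      _ = ENNReal.ofReal (∫ t in Ioi u, c * t ^ γ) := by
          rw [ofReal_integral_eq_lintegral_ofReal ((integrableOn_Ioi_rpow_of_lt hγ hu).const_mul c)]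
          filter_upwards [ae_restrict_mem measurableSet_Ioi] with t ht
          exact mul_nonneg hc (Real.rpow_nonneg (hu.trans ht).le γ)
      _ = ENNReal.ofReal (c * (-u ^ (γ + 1) / (γ + 1))) := by
          rw [integral_const_mul, integral_Ioi_rpow_of_lt hγ hu]
  have hbound : T * u + c * (-u ^ (γ + 1) / (γ + 1)) = γ / (γ + 1) * u * T := by
    have hγ1 : γ + 1 ≠ 0 := by linarith
    have hu' : u ^ (-γ) * u ^ (γ + 1) = u := by
      rw [← Real.rpow_add hu, neg_add_cancel_left, Real.rpow_one]
    field_simp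
    linear_combination (-T) * hu'
  have hI0 : 0 ≤ -u ^ (γ + 1) / (γ + 1) :=
    div_nonneg_of_nonpos (neg_nonpos.2 (Real.rpow_nonneg hu.le _)) (by linarith)
  have hS : MeasurableSet {ω | u < f ω} := measurableSet_lt measurable_const hf
  rw [integral_eq_lintegral_of_nonneg_ae
    (ae_restrict_of_forall_mem hS fun ω hω => hu.le.trans (le_of_lt hω))
    hf.aestronglyMeasurable.restrict, ← hbound]
  refine ENNReal.toReal_le_of_le_ofReal (by positivity) ?_
  rw [setLIntegral_gt_eq_mul_add_lintegral_meas_lt hf hu.le, ENNReal.ofReal_add (by positivity)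
    (by positivity), ENNReal.ofReal_mul hT, ofReal_measureReal]
  exact add_le_add_right hI _

theorem tendsto_setIntegral_gt_of_antitoneOn [IsFiniteMeasure μ] (hf : Measurable f) {γ X : ℝ}
    (hX : 0 < X) (hγ : γ < -1)
    (hanti : AntitoneOn (fun s => μ.real {ω | s < f ω} * s ^ (-γ)) (Ici X)) :
    Tendsto (fun u => ∫ ω in {ω | u < f ω}, f ω ∂μ) atTop (𝓝 0) := by
  set C := γ / (γ + 1) * (μ.real {ω | X < f ω} * X ^ (-γ))
  refine tendsto_of_tendsto_of_tendsto_of_le_of_le' tendsto_const_nhds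
    (tendsto_const_mul_rpow_atTop_nhds_zero C (by linarith : γ + 1 < 0)) ?_ ?_
  · filter_upwards [eventually_ge_atTop 0] with u hu
    exact setIntegral_nonneg (measurableSet_lt measurable_const hf)
      fun ω hω => hu.trans (le_of_lt hω)
  · filter_upwards [eventually_ge_atTop X] with u hXu
    have hu : 0 < u := hX.trans_le hXu
    have hK : 0 ≤ γ / (γ + 1) := div_nonneg_of_nonpos (by linarith) (by linarith)
    calc ∫ ω in {ω | u < f ω}, f ω ∂μ ≤ γ / (γ + 1) * u * μ.real {ω | u < f ω} :=
          setIntegral_gt_le_of_antitoneOn hf hu hγ (hanti.mono (Ici_subset_Ici.2 hXu))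
      _ ≤ γ / (γ + 1) * u * (μ.real {ω | X < f ω} * X ^ (-γ) * u ^ γ) := by
          gcongr
          exact hanti.le_mul_rpow hX le_rfl hXu
      _ = C * u ^ (γ + 1) := by
          rw [Real.rpow_add_one hu.ne']
          ring

theorem div_mul_setIntegral_gt_mul_le [IsFiniteMeasure μ] (hf : Measurable f) {γ a m t : ℝ}
    (hγ : γ < -1) (ha : 0 < a)
    (hanti : AntitoneOn (fun s => μ.real {ω | s < f ω} * s ^ (-γ)) (Ici a))
    (hm : m * μ.real {ω | a < f ω} = 1) (ht : 1 ≤ t) :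
    m / a * ∫ ω in {ω | t * a < f ω}, f ω ∂μ ≤ γ / (γ + 1) * t ^ (γ + 1) := by
  have hm0 : 0 ≤ m := by
    by_contra! hneg
    nlinarith [measureReal_nonneg (μ := μ) (s := {ω | a < f ω})]
  have hta : a ≤ t * a := le_mul_of_one_le_left ha.le ht
  have hK : 0 ≤ γ / (γ + 1) := div_nonneg_of_nonpos (by linarith) (by linarith)
  have ht0 : 0 < t := one_pos.trans_le ht
  calc m / a * ∫ ω in {ω | t * a < f ω}, f ω ∂μ
      ≤ m / a * (γ / (γ + 1) * (t * a) * μ.real {ω | t * a < f ω}) := by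
        gcongr
        exact setIntegral_gt_le_of_antitoneOn hf (by positivity) hγ
          (hanti.mono (Ici_subset_Ici.2 hta))
    _ ≤ m / a * (γ / (γ + 1) * (t * a) * (μ.real {ω | a < f ω} * a ^ (-γ) * (t * a) ^ γ)) := by
        gcongr
        exact hanti.le_mul_rpow ha le_rfl hta
    _ = γ / (γ + 1) * t ^ (γ + 1) * (m * μ.real {ω | a < f ω}) := by
        rw [Real.mul_rpow ht0.le ha.le, Real.rpow_add_one ht0.ne', Real.rpow_neg ha.le]
        field_simp
    _ = γ / (γ + 1) * t ^ (γ + 1) := by rw [hm, mul_one]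

theorem le_one_div_of_mul_measureReal_eq_one [IsFiniteMeasure μ] {a m X : ℝ}
    (hm0 : 0 ≤ m) (hm : m * μ.real {ω | a < f ω} = 1) (haX : a < X)
    (hX : 0 < μ.real {ω | X < f ω}) : m ≤ 1 / μ.real {ω | X < f ω} :=
  (le_div_iff₀ hX).2 <|
    hm ▸ mul_le_mul_of_nonneg_left (measureReal_mono fun ω hω => haX.trans hω) hm0

end TruncatedMean

theorem rescaled_measures_uniformly_integrable_general
    {Ω : Type*} [MeasurableSpace Ω] (P : Measure Ω) [IsProbabilityMeasure P]
    {d : ℕ} (G : Ω → EuclideanSpace ℝ (Fin d)) (hG : Measurable G)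
    (α : ℝ) (hα : α ∈ Set.Ioo (1:ℝ) 2)
    (b0 : ℝ → ℝ) (hb0pos : ∀ x : ℝ, 0 < x → 0 < b0 x)
    (hb0diff : ∀ x : ℝ, 0 < x → DifferentiableAt ℝ b0 x)
    (hb0slow : Tendsto (fun x : ℝ => x * deriv b0 x / b0 x) atTop (𝓝 0))
    (htail : ∀ x : ℝ, 0 < x → (P {ω | ‖G ω‖ > x}).toReal = b0 x * x ^ (-α))
    (a : ℕ → ℝ) (hapos : ∀ n : ℕ, 1 ≤ n → 0 < a n)
    (ha : ∀ n : ℕ, 1 ≤ n → (n:ℝ) * (P {ω | ‖G ω‖ > a n}).toReal = 1) :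
    ∀ ε : ℝ, 0 < ε → ∃ t0 : ℝ, ∀ t : ℝ, t0 ≤ t → ∀ n : ℕ, 1 ≤ n →
      ((n:ℝ) / a n) * ∫ ω in {ω | ‖G ω‖ > t * a n}, ‖G ω‖ ∂P ≤ ε := by
  intro ε hε
  obtain ⟨δ, hδ, hδα⟩ := exists_between (sub_pos.2 hα.1)
  have hγ : δ - α < -1 := by linarith
  obtain ⟨X, hX, hb0anti⟩ := exists_antitoneOn_mul_rpow_neg hδ hb0pos hb0diff hb0slow
  have hanti : AntitoneOn (fun s => P.real {ω | s < ‖G ω‖} * s ^ (-(δ - α))) (Ici X) :=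
    hb0anti.mul_rpow_neg_sub hX htail
  have hTX : 0 < P.real {ω | X < ‖G ω‖} := by
    rw [measureReal_def, htail X hX]
    exact mul_pos (hb0pos X hX) (Real.rpow_pos_of_pos hX _)
  set N := ⌊1 / P.real {ω | X < ‖G ω‖}⌋₊
  have hfinite : ∀ᶠ t in atTop, ∀ n ∈ Finset.Icc 1 N,
      (n : ℝ) / a n * ∫ ω in {ω | ‖G ω‖ > t * a n}, ‖G ω‖ ∂P ≤ ε := by
    refine (eventually_all_finset _).2 fun n hn => ?_
    have hlim := ((tendsto_setIntegral_gt_of_antitoneOn hG.norm hX hγ hanti).comp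
      (tendsto_id.atTop_mul_const (hapos n (Finset.mem_Icc.1 hn).1))).const_mul ((n : ℝ) / a n)
    rw [mul_zero] at hlim
    exact hlim.eventually (ge_mem_nhds hε)
  have hpow := (tendsto_const_mul_rpow_atTop_nhds_zero ((δ - α) / (δ - α + 1))
    (by linarith : δ - α + 1 < 0)).eventually (ge_mem_nhds hε)
  obtain ⟨t0, ht0⟩ := eventually_atTop.1 (hfinite.and (hpow.and (eventually_ge_atTop 1)))
  refine ⟨t0, fun t ht n hn => ?_⟩
  obtain ⟨hfin, hle, ht1⟩ := ht0 t ht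
  by_cases hXa : X ≤ a n
  · exact (div_mul_setIntegral_gt_mul_le hG.norm hγ (hapos n hn)
      (hanti.mono (Ici_subset_Ici.2 hXa)) (ha n hn) ht1).trans hle
  · exact hfin n (Finset.mem_Icc.2 ⟨hn, Nat.le_floor
      (le_one_div_of_mul_measureReal_eq_one n.cast_nonneg (ha n hn) (not_le.1 hXa) hTX)⟩)

/-- with `P(‖G‖ > x) = b0(x) x^{-α}`, `b0` differentiable slowly varying,
the tail continuous and strictly decreasing to `0`, and `a_n` defined by
`n P(‖G‖ > a_n) = 1`, the rescaled measures are uniformly integrable: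
`lim_{t→∞} sup_{n≥1} (n/a_n) E[‖G‖ 1{‖G‖ > t a_n}] = 0`. -/
theorem rescaled_measures_uniformly_integrable
    {Ω : Type*} [MeasurableSpace Ω] (P : Measure Ω) [IsProbabilityMeasure P]
    {d : ℕ} (G : Ω → EuclideanSpace ℝ (Fin d)) (hG : Measurable G)
    (α : ℝ) (hα : α ∈ Set.Ioo (1:ℝ) 2)
    (b0 : ℝ → ℝ) (hb0pos : ∀ x : ℝ, 0 < x → 0 < b0 x)
    (hb0diff : ∀ x : ℝ, 0 < x → DifferentiableAt ℝ b0 x)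
    (hb0slow : Tendsto (fun x : ℝ => x * deriv b0 x / b0 x) atTop (𝓝 0))
    (htail : ∀ x : ℝ, 0 < x → (P {ω | ‖G ω‖ > x}).toReal = b0 x * x ^ (-α))
    (hcont : ContinuousOn (fun x : ℝ => (P {ω | ‖G ω‖ > x}).toReal) (Set.Ioi 0))
    (hanti : StrictAntiOn (fun x : ℝ => (P {ω | ‖G ω‖ > x}).toReal) (Set.Ioi 0))
    (hto0 : Tendsto (fun x : ℝ => (P {ω | ‖G ω‖ > x}).toReal) atTop (𝓝 0))
    (a : ℕ → ℝ) (hapos : ∀ n : ℕ, 1 ≤ n → 0 < a n)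
    (ha : ∀ n : ℕ, 1 ≤ n → (n:ℝ) * (P {ω | ‖G ω‖ > a n}).toReal = 1) :
    ∀ ε : ℝ, 0 < ε → ∃ t0 : ℝ, ∀ t : ℝ, t0 ≤ t → ∀ n : ℕ, 1 ≤ n →
      ((n:ℝ) / a n) * ∫ ω in {ω | ‖G ω‖ > t * a n}, ‖G ω‖ ∂P ≤ ε :=
  rescaled_measures_uniformly_integrable_general P G hG α hα b0 hb0pos hb0diff hb0slow htail a hapos
    ha
end

section
/- Let α ∈ (1,2), let (ε_n)_{n≥1} be i.i.d. real random variables with symmetric distribution and P(ε_1 > x) = b0(x)·x^{−α} for x > 0, where b0 : (0,∞) → (0,∞) is slowly varying (b0(tx)/b0(t) → 1 as t → ∞ for every x > 0), and let b1 : [1,∞) → (0,∞) satisfy P(|ε_1| > t^{1/α}·b1(t)^{−1}) = t^{−1} for all t ≥ 1. Let η_n = c·n^{−ρ} with c > 0, ρ ∈ (0,1], and η_n ∈ (0,1) for all n, and define X̃_1 = 0 and X̃_{n+1} = (1 − η_n)·X̃_n + η_n^{1/α}·b1(η_n^{−1})·ε_n. Then the sequence (X̃_n)_{n≥1} is tight: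 for every δ > 0 there exists C > 0 such that P(|X̃_n| > C) ≤ δ for every n. -/
/-!
Write `T x = P(|ε₁| > x)`. Unrolling the recursion gives `X_{m+1} = ∑_{k ≤ m} w_k ε_k` with
`w_k = σ_k β_k`, `σ_k = η_k^{1/α} b1(η_k⁻¹)` and `β_k = ∏_{k < j ≤ m} (1 - η_j)`, where the weights
satisfy `∑_k η_k β_k ≤ 1`, and the quantile relation reads `T(σ_k⁻¹) = η_k`.
Truncating every summand at level `C` and applying Chebyshev's inequality to the truncated sum,
which is centred by symmetry, gives
`P(|X_{m+1}| > C) ≤ ∑_k T(C / w_k) + C⁻² ∑_k E[(w_k ε_k)²; |w_k ε_k| ≤ C]`.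
Regular variation of index `α ∈ (1, 2)` gives `T(2s) ≤ T(s)/2` and `T(s) ≤ a T(2s)` with `a < 4`
for large `s`. The first yields the Potter bound `T y ≤ K (x / y) T x`, hence
`T(C / w_k) ≤ K η_k β_k / C`; the second yields the Karamata bound `E[ε²; |ε| ≤ u] ≤ K' u² T u`,
which makes the second-moment term at most `K' ∑_k T(C / w_k)`. So `P(|X_n| > C) ≤ (1 + K') K / C`
for every `n`.
-/

open MeasureTheory ProbabilityTheory Filter Topology Set

theorem forall_ge_of_halving {p : ℝ → Prop} {x₀ : ℝ} (hx₀ : 0 < x₀)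
    (base : ∀ u, x₀ ≤ u → u ≤ 2 * x₀ → p u) (step : ∀ u, 2 * x₀ ≤ u → p (u / 2) → p u) :
    ∀ u, x₀ ≤ u → p u := by
  suffices h : ∀ n : ℕ, ∀ u, x₀ ≤ u → u ≤ 2 ^ n * x₀ → p u by
    intro u hu
    obtain ⟨n, hn⟩ := pow_unbounded_of_one_lt (u / x₀) one_lt_two
    exact h n u hu ((div_lt_iff₀ hx₀).1 hn).le
  intro n
  induction n with
  | zero =>
    intro u hu hu'
    rw [pow_zero, one_mul] at hu'
    exact base u hu (by linarith)
  | succ n ih =>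
    intro u hu hu'
    rcases le_or_gt u (2 * x₀) with h | h
    · exact base u hu h
    · exact step u h.le (ih _ (by linarith) (by rw [pow_succ] at hu'; linarith))

section Doubling

variable {T : ℝ → ℝ} {x₀ : ℝ}

theorem le_two_mul_div_mul_of_half (hT : Antitone T) (hhalf : ∀ s, x₀ ≤ s → T (2 * s) ≤ T s / 2)
    {x : ℝ} (hx₀ : 0 < x₀) (hx : x₀ ≤ x) (hTx : 0 ≤ T x) :
    ∀ y, x ≤ y → T y ≤ 2 * (x / y) * T x := by
  have hx0 : 0 < x := hx₀.trans_le hx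
  refine forall_ge_of_halving hx0 (fun y hxy hy => ?_) (fun y hy ih => ?_)
  · have : 1 ≤ 2 * (x / y) := by
      rw [mul_div_assoc', le_div_iff₀ (by linarith)]; linarith
    calc T y ≤ T x := hT hxy
      _ ≤ 2 * (x / y) * T x := le_mul_of_one_le_left hTx this
  · calc T y = T (2 * (y / 2)) := by ring_nf
      _ ≤ T (y / 2) / 2 := hhalf _ (by linarith)
      _ ≤ 2 * (x / (y / 2)) * T x / 2 := by gcongr
      _ = 2 * (x / y) * T x := by field_simp

theorem le_mul_div_mul_of_half (hT : Antitone T) (hT0 : ∀ x, 0 ≤ T x)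
    (hhalf : ∀ s, x₀ ≤ s → T (2 * s) ≤ T s / 2) (hx₀ : 0 < x₀) {a : ℝ} (ha : 0 < a)
    {x y : ℝ} (hax : a ≤ x) (hxy : x ≤ y) (hy : x₀ ≤ y) :
    T y ≤ 2 * max 1 (x₀ / a) * (x / y) * T x := by
  have hy0 : 0 < y := hx₀.trans_le hy
  have hx0 : 0 < x := ha.trans_le hax
  rcases le_total x₀ x with hx | hx
  · calc T y ≤ 2 * (x / y) * T x := le_two_mul_div_mul_of_half hT hhalf hx₀ hx (hT0 x) y hxy
      _ ≤ 2 * max 1 (x₀ / a) * (x / y) * T x := by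
        have := le_max_left 1 (x₀ / a)
        have := hT0 x
        have : 0 ≤ x / y := by positivity
        gcongr
        linarith
  · have hx₀x : x₀ ≤ x₀ / a * x := by
      rw [div_mul_eq_mul_div, le_div_iff₀ ha]; gcongr
    calc T y ≤ 2 * (x₀ / y) * T x₀ := le_two_mul_div_mul_of_half hT hhalf hx₀ le_rfl (hT0 x₀) y hy
      _ ≤ 2 * (x₀ / a * x / y) * T x := by
        have := hT0 x₀
        gcongr
        exact hT hx
      _ ≤ 2 * max 1 (x₀ / a) * (x / y) * T x := by
        have := hT0 x
        have : 0 ≤ x / y := by positivity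
        rw [mul_div_assoc, ← mul_assoc]
        gcongr
        exact le_max_right _ _

theorem tendsto_div_of_eq_mul_rpow {L : ℝ → ℝ} {α : ℝ} (hTL : ∀ x, 0 < x → T x = L x * x ^ (-α))
    (hL : Tendsto (fun s => L (s * 2) / L s) atTop (𝓝 1)) :
    Tendsto (fun s => T (2 * s) / T s) atTop (𝓝 ((2 : ℝ) ^ α)⁻¹) := by
  rw [← one_mul ((2 : ℝ) ^ α)⁻¹]
  refine (hL.mul_const _).congr' ?_
  filter_upwards [eventually_gt_atTop 0] with s hs
  have hsα : s ^ (-α) ≠ 0 := (Real.rpow_pos_of_pos hs _).ne'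
  rw [hTL _ (by positivity), hTL s hs, mul_comm 2 s, Real.mul_rpow hs.le zero_le_two,
    Real.rpow_neg zero_le_two, ← mul_assoc, mul_right_comm, mul_div_mul_right _ _ hsα,
    mul_div_right_comm]

theorem eventually_doubling_bounds (hT0 : ∀ x, 0 ≤ T x) {A a : ℝ}
    (hlim : Tendsto (fun s => T (2 * s) / T s) atTop (𝓝 A⁻¹)) (hA : 2 < A) (hAa : A < a) :
    ∀ᶠ s in atTop, 0 < T s ∧ T (2 * s) ≤ T s / 2 ∧ T s ≤ a * T (2 * s) := by
  have ha : 0 < a := by linarith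
  have hmem : A⁻¹ ∈ Ioo a⁻¹ 2⁻¹ :=
    ⟨inv_strictAnti₀ (by linarith) hAa, inv_strictAnti₀ two_pos hA⟩
  filter_upwards [hlim.eventually (Ioo_mem_nhds hmem.1 hmem.2)] with s ⟨hlo, hhi⟩
  have hTs : 0 < T s := by
    refine (hT0 s).lt_of_ne fun h => ?_
    rw [← h, div_zero] at hlo
    exact (inv_pos.2 ha).not_gt hlo
  refine ⟨hTs, ?_, ?_⟩
  · rw [div_lt_iff₀ hTs] at hhi
    linarith
  · rw [lt_div_iff₀ hTs, inv_mul_lt_iff₀ ha] at hlo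
    linarith

end Doubling

theorem linear_recursion_eq {R : Type*} [CommSemiring R] {x a b : ℕ → R}
    (h : ∀ n, 1 ≤ n → x (n + 1) = a n * x n + b n) (m : ℕ) :
    x (m + 1) = (∏ j ∈ Finset.Ioc 0 m, a j) * x 1 +
      ∑ k ∈ Finset.Ioc 0 m, (∏ j ∈ Finset.Ioc k m, a j) * b k := by
  induction m with
  | zero => simp
  | succ m ih =>
    have hprod : ∀ k ∈ Finset.Ioc 0 m,
        (∏ j ∈ Finset.Ioc k (m + 1), a j) * b k = a (m + 1) * ((∏ j ∈ Finset.Ioc k m, a j) * b k) :=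
      fun k hk => by rw [Finset.prod_Ioc_succ_top (Finset.mem_Ioc.1 hk).2]; ring
    rw [h (m + 1) (by omega), ih, Finset.prod_Ioc_succ_top (by omega),
      Finset.sum_Ioc_succ_top (by omega), Finset.sum_congr rfl hprod, ← Finset.mul_sum,
      Finset.Ioc_self, Finset.prod_empty]
    ring

theorem sum_prod_one_sub_mul_add_prod {R : Type*} [CommRing R] (η : ℕ → R) (m : ℕ) :
    ∑ k ∈ Finset.Ioc 0 m, (∏ j ∈ Finset.Ioc k m, (1 - η j)) * η k +
      ∏ j ∈ Finset.Ioc 0 m, (1 - η j) = 1 := by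
  have := linear_recursion_eq (x := fun _ => (1 : R)) (a := fun n => 1 - η n) (b := η)
    (fun n _ => by ring) m
  rw [mul_one] at this
  rw [add_comm, ← this]

theorem prod_one_sub_pos_and_le_one {η : ℕ → ℝ} (hη : ∀ n, 1 ≤ n → η n ∈ Ioo 0 1) (m k : ℕ) :
    0 < ∏ j ∈ Finset.Ioc k m, (1 - η j) ∧ ∏ j ∈ Finset.Ioc k m, (1 - η j) ≤ 1 := by
  have hfactor : ∀ j ∈ Finset.Ioc k m, 0 < 1 - η j ∧ 1 - η j ≤ 1 := fun j hj => by
    have := hη j (by have := (Finset.mem_Ioc.1 hj).1; omega)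
    exact ⟨by linarith [this.2], by linarith [this.1]⟩
  exact ⟨Finset.prod_pos fun j hj => (hfactor j hj).1,
    Finset.prod_le_one (fun j hj => (hfactor j hj).1.le) fun j hj => (hfactor j hj).2⟩

theorem sum_prod_one_sub_mul_le_one {η : ℕ → ℝ} (hη : ∀ n, 1 ≤ n → η n ∈ Ioo 0 1) (m : ℕ) :
    ∑ k ∈ Finset.Ioc 0 m, (∏ j ∈ Finset.Ioc k m, (1 - η j)) * η k ≤ 1 := by
  linarith [sum_prod_one_sub_mul_add_prod η m, (prod_one_sub_pos_and_le_one hη m 0).1]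

noncomputable def truncate (C x : ℝ) : ℝ := if |x| ≤ C then x else 0

theorem measurable_truncate (C : ℝ) : Measurable (truncate C) :=
  Measurable.ite (measurableSet_le measurable_id.abs measurable_const) measurable_id
    measurable_const

theorem truncate_of_abs_le {C x : ℝ} (h : |x| ≤ C) : truncate C x = x := if_pos h

theorem truncate_neg (C x : ℝ) : truncate C (-x) = -truncate C x := by
  unfold truncate
  rw [abs_neg]
  split_ifs <;> simp

theorem truncate_mul {w : ℝ} (hw : 0 < w) (C x : ℝ) :
    truncate C (w * x) = w * truncate (C / w) x := by
  have : |w * x| ≤ C ↔ |x| ≤ C / w := by rw [abs_mul, abs_of_pos hw, le_div_iff₀' hw]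
  unfold truncate
  by_cases h : |x| ≤ C / w
  · rw [if_pos (this.2 h), if_pos h]
  · rw [if_neg (mt this.1 h), if_neg h, mul_zero]

theorem abs_truncate_le {C : ℝ} (hC : 0 ≤ C) (x : ℝ) : |truncate C x| ≤ C := by
  unfold truncate
  split_ifs with h
  exacts [h, by simpa using hC]

theorem truncate_sq_le_sq (C x : ℝ) : truncate C x ^ 2 ≤ C ^ 2 := by
  unfold truncate
  split_ifs with h
  · rw [← sq_abs x]
    exact pow_le_pow_left₀ (abs_nonneg x) h 2
  · simpa using sq_nonneg C

theorem truncate_sq_le_half (u x : ℝ) :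
    truncate u x ^ 2 ≤ truncate (u / 2) x ^ 2 + {y | u / 2 < |y|}.indicator (fun _ => u ^ 2) x := by
  by_cases hx : |x| ≤ u / 2
  · rw [truncate_of_abs_le hx, truncate_of_abs_le (by linarith [abs_nonneg x]),
      indicator_of_notMem (by simpa using hx)]
    simp
  · rw [indicator_of_mem (by simpa using hx)]
    nlinarith [truncate_sq_le_sq u x, sq_nonneg (truncate (u / 2) x)]

section Tail

variable {Ω : Type*} [MeasurableSpace Ω] {μ : Measure Ω}

def tailProb (μ : Measure Ω) (f : Ω → ℝ) (x : ℝ) : ℝ := μ.real {ω | x < |f ω|}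

theorem tailProb_nonneg (f : Ω → ℝ) (x : ℝ) : 0 ≤ tailProb μ f x := measureReal_nonneg

theorem tailProb_antitone [IsFiniteMeasure μ] (f : Ω → ℝ) : Antitone (tailProb μ f) :=
  fun _ _ hab => measureReal_mono fun _ hω => hab.trans_lt hω

theorem tailProb_eq_two_mul [IsFiniteMeasure μ] {f : Ω → ℝ} (hf : Measurable f)
    (hsymm : IdentDistrib f (fun ω => -f ω) μ μ) {x : ℝ} (hx : 0 ≤ x) :
    tailProb μ f x = 2 * μ.real {ω | x < f ω} := by
  have hsplit : {ω | x < |f ω|} = {ω | x < f ω} ∪ {ω | f ω < -x} := by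
    ext ω
    simp only [mem_union, mem_ofPred_eq, lt_abs, lt_neg]
  have hdisj : Disjoint {ω | x < f ω} {ω | f ω < -x} :=
    disjoint_left.2 fun ω h₁ h₂ => by simp only [mem_ofPred_eq] at h₁ h₂; linarith
  have hneg : μ.real {ω | f ω < -x} = μ.real {ω | x < f ω} := by
    have := hsymm.measure_mem_eq
      (measurableSet_lt measurable_const measurable_id : MeasurableSet {y : ℝ | x < y})
    simp only [preimage_ofPred_eq, lt_neg] at this
    simp only [measureReal_def, this]
  rw [tailProb, hsplit, measureReal_union hdisj (measurableSet_lt hf measurable_const), hneg]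
  ring

theorem integral_comp_eq_zero_of_identDistrib_neg {X : Ω → ℝ}
    (hX : IdentDistrib X (fun ω => -X ω) μ μ) {g : ℝ → ℝ} (hg : Measurable g)
    (hodd : ∀ x, g (-x) = -g x) : ∫ ω, g (X ω) ∂μ = 0 := by
  have h := (hX.comp hg).integral_eq
  simp only [Function.comp_def, hodd, integral_neg] at h
  linarith

theorem integrable_truncate_sq [IsFiniteMeasure μ] {f : Ω → ℝ} (hf : Measurable f) (u : ℝ) :
    Integrable (fun ω => truncate u (f ω) ^ 2) μ :=
  .of_bound (((measurable_truncate u).comp hf).pow_const 2).aestronglyMeasurable (u ^ 2)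
    (ae_of_all _ fun ω => by
      rw [Real.norm_of_nonneg (sq_nonneg _)]
      exact truncate_sq_le_sq u (f ω))

theorem integral_truncate_sq_le_half [IsFiniteMeasure μ] {f : Ω → ℝ} (hf : Measurable f) (u : ℝ) :
    ∫ ω, truncate u (f ω) ^ 2 ∂μ ≤
      ∫ ω, truncate (u / 2) (f ω) ^ 2 ∂μ + u ^ 2 * tailProb μ f (u / 2) := by
  have hset : MeasurableSet {ω | u / 2 < |f ω|} := measurableSet_lt measurable_const hf.abs
  have hind : Integrable ({ω | u / 2 < |f ω|}.indicator fun _ => u ^ 2) μ :=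
    (integrable_const _).indicator hset
  calc ∫ ω, truncate u (f ω) ^ 2 ∂μ
      ≤ ∫ ω, (truncate (u / 2) (f ω) ^ 2 + {ω | u / 2 < |f ω|}.indicator (fun _ => u ^ 2) ω) ∂μ :=
        integral_mono (integrable_truncate_sq hf u) ((integrable_truncate_sq hf _).add hind)
          fun ω => truncate_sq_le_half u (f ω)
    _ = ∫ ω, truncate (u / 2) (f ω) ^ 2 ∂μ + u ^ 2 * tailProb μ f (u / 2) := by
        rw [integral_add (integrable_truncate_sq hf _) hind, integral_indicator_const _ hset,
          smul_eq_mul, mul_comm, tailProb]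

/-- With `F u = E[f²; |f| ≤ u]` and `T = tailProb μ f`, `F u ≤ F (u / 2) + u² T (u / 2)` and
`T (u / 2) ≤ a T u`, so since `a < 4` the ratio `F u / (u² T u)` satisfies a contracting
recursion along halvings. -/
theorem exists_integral_truncate_sq_le [IsProbabilityMeasure μ] {f : Ω → ℝ} (hf : Measurable f)
    {x₀ a : ℝ} (hx₀ : 0 < x₀) (ha : a < 4) (hpos : 0 < tailProb μ f (2 * x₀))
    (hdouble : ∀ s, x₀ ≤ s → tailProb μ f s ≤ a * tailProb μ f (2 * s)) :
    ∃ K, 0 < K ∧ ∀ u, x₀ ≤ u → ∫ ω, truncate u (f ω) ^ 2 ∂μ ≤ K * (u ^ 2 * tailProb μ f u) := by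
  set T := tailProb μ f
  set M := max (T (2 * x₀))⁻¹ (4 * a / (4 - a))
  refine ⟨M, (inv_pos.2 hpos).trans_le (le_max_left _ _),
    forall_ge_of_halving hx₀ (fun u hu hu' => ?_) (fun u hu ih => ?_)⟩
  · have hTu : T (2 * x₀) ≤ T u := tailProb_antitone f hu'
    calc ∫ ω, truncate u (f ω) ^ 2 ∂μ ≤ ∫ _, u ^ 2 ∂μ :=
          integral_mono (integrable_truncate_sq hf u) (integrable_const _)
            fun ω => truncate_sq_le_sq u (f ω)
      _ = (T (2 * x₀))⁻¹ * (u ^ 2 * T (2 * x₀)) := by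
          rw [integral_const, probReal_univ, one_smul]
          field_simp
      _ ≤ M * (u ^ 2 * T u) := by
          gcongr
          exacts [le_max_left _ _]
  · have hM : (M / 4 + 1) * a ≤ M := by
      have : 4 * a / (4 - a) ≤ M := le_max_right _ _
      rw [div_le_iff₀ (by linarith)] at this
      nlinarith
    have hTu : T (u / 2) ≤ a * T u := by
      simpa [mul_div_cancel₀] using hdouble (u / 2) (by linarith)
    calc ∫ ω, truncate u (f ω) ^ 2 ∂μ ≤ M * ((u / 2) ^ 2 * T (u / 2)) + u ^ 2 * T (u / 2) :=
          (integral_truncate_sq_le_half hf u).trans (by gcongr)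
      _ = (M / 4 + 1) * u ^ 2 * T (u / 2) := by ring
      _ ≤ (M / 4 + 1) * u ^ 2 * (a * T u) := by
          have : 0 ≤ M := le_trans (inv_nonneg.2 hpos.le) (le_max_left _ _)
          gcongr
      _ = (M / 4 + 1) * a * (u ^ 2 * T u) := by ring
      _ ≤ M * (u ^ 2 * T u) := by
          have : 0 ≤ T u := tailProb_nonneg f u
          gcongr

theorem measureReal_abs_sum_gt_le [IsProbabilityMeasure μ] {ι : Type*} {Y : ι → Ω → ℝ}
    (hY : ∀ k, Measurable (Y k)) (hindep : iIndepFun Y μ)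
    (hsymm : ∀ k, IdentDistrib (Y k) (fun ω => -Y k ω) μ μ) (s : Finset ι) {C : ℝ} (hC : 0 < C) :
    μ.real {ω | C < |∑ k ∈ s, Y k ω|} ≤
      ∑ k ∈ s, tailProb μ (Y k) C + (∑ k ∈ s, ∫ ω, truncate C (Y k ω) ^ 2 ∂μ) / C ^ 2 := by
  set Z : ι → Ω → ℝ := fun k ω => truncate C (Y k ω)
  set S : Ω → ℝ := ∑ k ∈ s, Z k
  have hZ : ∀ k, MemLp (Z k) 2 μ := fun k =>
    .of_bound ((measurable_truncate C).comp (hY k)).aestronglyMeasurable C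
      (ae_of_all _ fun ω => abs_truncate_le hC.le _)
  have hmean : ∀ k, ∫ ω, Z k ω ∂μ = 0 := fun k =>
    integral_comp_eq_zero_of_identDistrib_neg (hsymm k) (measurable_truncate C) (truncate_neg C)
  have hS_mean : ∫ ω, S ω ∂μ = 0 := by
    simp only [S, Finset.sum_apply]
    rw [integral_finsetSum _ fun k _ => (hZ k).integrable one_le_two]
    exact Finset.sum_eq_zero fun k _ => hmean k
  have hS_var : Var[S; μ] = ∑ k ∈ s, ∫ ω, truncate C (Y k ω) ^ 2 ∂μ := by
    rw [IndepFun.variance_sum (fun k _ => hZ k) fun i _ j _ hij =>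
      (hindep.comp _ fun _ => measurable_truncate C).indepFun hij]
    exact Finset.sum_congr rfl fun k _ =>
      variance_of_integral_eq_zero (hZ k).aemeasurable (hmean k)
  have hsub : {ω | C < |∑ k ∈ s, Y k ω|} ⊆
      (⋃ k ∈ s, {ω | C < |Y k ω|}) ∪ {ω | C ≤ |S ω - ∫ ω, S ω ∂μ|} := by
    intro ω hω
    by_cases hall : ∀ k ∈ s, |Y k ω| ≤ C
    · right
      show C ≤ |S ω - ∫ ω, S ω ∂μ|
      rw [hS_mean, sub_zero]
      simp only [S, Z, Finset.sum_apply]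
      rw [Finset.sum_congr rfl fun k hk => truncate_of_abs_le (hall k hk)]
      exact le_of_lt hω
    · push Not at hall
      obtain ⟨k, hk, hgt⟩ := hall
      exact Or.inl (mem_biUnion hk hgt)
  calc μ.real {ω | C < |∑ k ∈ s, Y k ω|}
      ≤ μ.real (⋃ k ∈ s, {ω | C < |Y k ω|}) + μ.real {ω | C ≤ |S ω - ∫ ω, S ω ∂μ|} :=
        (measureReal_mono hsub).trans (measureReal_union_le _ _)
    _ ≤ ∑ k ∈ s, tailProb μ (Y k) C + Var[S; μ] / C ^ 2 :=
        add_le_add (measureReal_biUnion_finset_le _ _)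
          (ENNReal.toReal_le_of_le_ofReal (div_nonneg (variance_nonneg _ _) (sq_nonneg _))
            (meas_ge_le_variance_div_sq (memLp_finsetSum' _ fun k _ => hZ k) hC))
    _ = _ := by rw [hS_var]

theorem tailProb_const_mul {f g : Ω → ℝ} (hfg : IdentDistrib f g μ μ) {w : ℝ} (hw : 0 < w)
    (C : ℝ) : tailProb μ (fun ω => w * f ω) C = tailProb μ g (C / w) := by
  have hset : {ω | C < |w * f ω|} = f ⁻¹' {y | C / w < |y|} := by
    ext ω
    simp [abs_mul, abs_of_pos hw, div_lt_iff₀' hw]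
  rw [tailProb, tailProb, hset, measureReal_def, measureReal_def,
    hfg.measure_mem_eq (measurableSet_lt measurable_const continuous_abs.measurable)]
  rfl

theorem integral_truncate_const_mul_sq {f g : Ω → ℝ} (hfg : IdentDistrib f g μ μ) {w : ℝ}
    (hw : 0 < w) (C : ℝ) :
    ∫ ω, truncate C (w * f ω) ^ 2 ∂μ = w ^ 2 * ∫ ω, truncate (C / w) (g ω) ^ 2 ∂μ := by
  simp_rw [truncate_mul hw, mul_pow]
  rw [integral_const_mul]
  exact congrArg _ (hfg.comp ((measurable_truncate (C / w)).pow_const 2)).integral_eq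

theorem measureReal_abs_weighted_sum_gt_le [IsProbabilityMeasure μ] {ι : Type*}
    {ε : ι → Ω → ℝ} {ξ : Ω → ℝ} (hmeas : ∀ i, Measurable (ε i)) (hindep : iIndepFun ε μ)
    (hident : ∀ i, IdentDistrib (ε i) ξ μ μ) (hsymm : IdentDistrib ξ (fun ω => -ξ ω) μ μ)
    {x₀ K : ℝ} (hK : ∀ u, x₀ ≤ u → ∫ ω, truncate u (ξ ω) ^ 2 ∂μ ≤ K * (u ^ 2 * tailProb μ ξ u))
    (s : Finset ι) {w : ι → ℝ} {C : ℝ} (hC : 0 < C) (hw : ∀ i ∈ s, 0 < w i ∧ x₀ ≤ C / w i) :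
    μ.real {ω | C < |∑ i ∈ s, w i * ε i ω|} ≤ (1 + K) * ∑ i ∈ s, tailProb μ ξ (C / w i) := by
  have hsymm_w : ∀ i, IdentDistrib (fun ω => w i * ε i ω) (fun ω => -(w i * ε i ω)) μ μ := by
    intro i
    have := (((hident i).trans hsymm).trans ((hident i).symm.comp measurable_neg)).comp
      (measurable_const_mul (w i))
    simpa [Function.comp_def] using this
  have hmoment : ∀ i ∈ s, ∫ ω, truncate C (w i * ε i ω) ^ 2 ∂μ ≤
      K * C ^ 2 * tailProb μ ξ (C / w i) := by
    intro i hi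
    obtain ⟨hwi, hx₀i⟩ := hw i hi
    rw [integral_truncate_const_mul_sq (hident i) hwi]
    calc w i ^ 2 * ∫ ω, truncate (C / w i) (ξ ω) ^ 2 ∂μ
        ≤ w i ^ 2 * (K * ((C / w i) ^ 2 * tailProb μ ξ (C / w i))) := by gcongr; exact hK _ hx₀i
      _ = K * C ^ 2 * tailProb μ ξ (C / w i) := by field_simp
  refine (measureReal_abs_sum_gt_le (fun i => (hmeas i).const_mul (w i))
    (hindep.comp _ fun i => measurable_const_mul (w i)) hsymm_w s hC).trans ?_
  rw [Finset.sum_congr rfl fun i hi => tailProb_const_mul (hident i) (hw i hi).1 C]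
  calc ∑ i ∈ s, tailProb μ ξ (C / w i) + (∑ i ∈ s, ∫ ω, truncate C (w i * ε i ω) ^ 2 ∂μ) / C ^ 2
      ≤ ∑ i ∈ s, tailProb μ ξ (C / w i) +
          K * C ^ 2 * (∑ i ∈ s, tailProb μ ξ (C / w i)) / C ^ 2 := by
        rw [Finset.mul_sum]
        gcongr with i hi
        exact hmoment i hi
    _ = (1 + K) * ∑ i ∈ s, tailProb μ ξ (C / w i) := by field_simp

end Tail

section Recursion

variable {Ω : Type*} [MeasurableSpace Ω] {μ : Measure Ω}

theorem measureReal_abs_recursion_gt_le [IsProbabilityMeasure μ] {ε : ℕ → Ω → ℝ}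
    (hmeas : ∀ n, Measurable (ε n)) (hindep : iIndepFun ε μ)
    (hident : ∀ n, IdentDistrib (ε n) (ε 1) μ μ) (hsymm : IdentDistrib (ε 1) (fun ω => -ε 1 ω) μ μ)
    {η σ : ℕ → ℝ} (hη : ∀ n, 1 ≤ n → η n ∈ Ioo 0 1)
    (hTσ : ∀ n, 1 ≤ n → tailProb μ (ε 1) (σ n)⁻¹ = η n)
    {X : ℕ → Ω → ℝ} (hX1 : ∀ ω, X 1 ω = 0)
    (hXrec : ∀ n, 1 ≤ n → ∀ ω, X (n + 1) ω = (1 - η n) * X n ω + σ n * ε n ω)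
    {x₀ a₁ K₁ K₂ : ℝ} (hσ : ∀ n, 1 ≤ n → 0 < σ n ∧ a₁ ≤ (σ n)⁻¹) (hK₁ : 0 ≤ K₁) (hK₂ : 0 ≤ K₂)
    (hpotter : ∀ x y, a₁ ≤ x → x ≤ y → x₀ ≤ y →
      tailProb μ (ε 1) y ≤ K₁ * (x / y) * tailProb μ (ε 1) x)
    (hmoment : ∀ u, x₀ ≤ u →
      ∫ ω, truncate u (ε 1 ω) ^ 2 ∂μ ≤ K₂ * (u ^ 2 * tailProb μ (ε 1) u))
    {C : ℝ} (hC : 1 ≤ C) (hCx₀ : x₀ ≤ a₁ * C) (m : ℕ) :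
    μ.real {ω | C < |X (m + 1) ω|} ≤ (1 + K₂) * K₁ / C := by
  set T := tailProb μ (ε 1)
  set β : ℕ → ℝ := fun k => ∏ j ∈ Finset.Ioc k m, (1 - η j)
  have hβ : ∀ k, 0 < β k ∧ β k ≤ 1 := prod_one_sub_pos_and_le_one hη m
  have hX : ∀ ω, X (m + 1) ω = ∑ k ∈ Finset.Ioc 0 m, σ k * β k * ε k ω := fun ω => by
    have := linear_recursion_eq (x := fun n => X n ω) (fun n hn => hXrec n hn ω) m
    simp only [hX1, mul_zero, zero_add] at this
    exact this.trans (Finset.sum_congr rfl fun k _ => by ring)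
  have hw : ∀ k ∈ Finset.Ioc 0 m, 0 < σ k * β k ∧ (σ k)⁻¹ ≤ C / (σ k * β k) ∧
      x₀ ≤ C / (σ k * β k) := by
    intro k hk
    obtain ⟨hσk, hσka⟩ := hσ k (Finset.mem_Ioc.1 hk).1
    have hle : (σ k)⁻¹ * C ≤ C / (σ k * β k) := by
      rw [show C / (σ k * β k) = (σ k)⁻¹ * C / β k by field_simp]
      exact le_div_self (by positivity) (hβ k).1 (hβ k).2
    exact ⟨mul_pos hσk (hβ k).1, (le_mul_of_one_le_right (by positivity) hC).trans hle,
      (hCx₀.trans (mul_le_mul_of_nonneg_right hσka (by linarith))).trans hle⟩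
  have hterm : ∀ k ∈ Finset.Ioc 0 m, T (C / (σ k * β k)) ≤ K₁ / C * (β k * η k) := by
    intro k hk
    obtain ⟨-, hσC, hx₀C⟩ := hw k hk
    calc T (C / (σ k * β k)) ≤ K₁ * ((σ k)⁻¹ / (C / (σ k * β k))) * T (σ k)⁻¹ :=
          hpotter _ _ (hσ k (Finset.mem_Ioc.1 hk).1).2 hσC hx₀C
      _ = K₁ / C * (β k * η k) := by
          rw [hTσ k (Finset.mem_Ioc.1 hk).1]
          field_simp [(hσ k (Finset.mem_Ioc.1 hk).1).1.ne', (hβ k).1.ne']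
  simp_rw [hX]
  calc μ.real {ω | C < |∑ k ∈ Finset.Ioc 0 m, σ k * β k * ε k ω|}
      ≤ (1 + K₂) * ∑ k ∈ Finset.Ioc 0 m, T (C / (σ k * β k)) :=
        measureReal_abs_weighted_sum_gt_le hmeas hindep hident hsymm hmoment _ (by linarith)
          fun k hk => ⟨(hw k hk).1, (hw k hk).2.2⟩
    _ ≤ (1 + K₂) * ∑ k ∈ Finset.Ioc 0 m, K₁ / C * (β k * η k) := by
        gcongr with k hk
        exact hterm k hk
    _ ≤ (1 + K₂) * (K₁ / C * 1) := by
        rw [← Finset.mul_sum]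
        gcongr
        exact sum_prod_one_sub_mul_le_one hη m
    _ = (1 + K₂) * K₁ / C := by ring

theorem tight_of_tendsto_tailProb_div [IsProbabilityMeasure μ] {ε : ℕ → Ω → ℝ}
    (hmeas : ∀ n, Measurable (ε n)) (hindep : iIndepFun ε μ)
    (hident : ∀ n, IdentDistrib (ε n) (ε 1) μ μ) (hsymm : IdentDistrib (ε 1) (fun ω => -ε 1 ω) μ μ)
    {α : ℝ} (hα : α ∈ Ioo 1 2)
    (hlim : Tendsto (fun s => tailProb μ (ε 1) (2 * s) / tailProb μ (ε 1) s) atTop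
      (𝓝 ((2 : ℝ) ^ α)⁻¹))
    {a₁ : ℝ} (ha₁ : 0 < a₁) (hTa₁ : tailProb μ (ε 1) a₁ = 1)
    {η σ : ℕ → ℝ} (hη : ∀ n, 1 ≤ n → η n ∈ Ioo 0 1) (hσ : ∀ n, 1 ≤ n → 0 < σ n)
    (hTσ : ∀ n, 1 ≤ n → tailProb μ (ε 1) (σ n)⁻¹ = η n)
    {X : ℕ → Ω → ℝ} (hX1 : ∀ ω, X 1 ω = 0)
    (hXrec : ∀ n, 1 ≤ n → ∀ ω, X (n + 1) ω = (1 - η n) * X n ω + σ n * ε n ω) :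
    ∀ δ, 0 < δ → ∃ C, 0 < C ∧ ∀ n, 1 ≤ n → μ.real {ω | C < |X n ω|} ≤ δ := by
  have h2α : 2 < (2 : ℝ) ^ α ∧ (2 : ℝ) ^ α < 4 := by
    constructor
    · simpa using Real.rpow_lt_rpow_of_exponent_lt one_lt_two hα.1
    · exact (Real.rpow_lt_rpow_of_exponent_lt one_lt_two hα.2).trans_eq (by norm_num)
  obtain ⟨x₀, hx₀⟩ := ((eventually_doubling_bounds (tailProb_nonneg _) hlim h2α.1
    (a := ((2 : ℝ) ^ α + 4) / 2) (by linarith)).and (eventually_gt_atTop 0)).exists_forall_of_atTop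
  have hx₀pos : 0 < x₀ := (hx₀ x₀ le_rfl).2
  obtain ⟨K₂, hK₂, hmoment⟩ := exists_integral_truncate_sq_le (hmeas 1) hx₀pos (by linarith)
    (hx₀ (2 * x₀) (by linarith)).1.1 fun s hs => (hx₀ s hs).1.2.2
  have hσa : ∀ n, 1 ≤ n → 0 < σ n ∧ a₁ ≤ (σ n)⁻¹ := fun n hn => by
    refine ⟨hσ n hn, le_of_not_gt fun h => ?_⟩
    have := tailProb_antitone (μ := μ) (ε 1) h.le
    rw [hTσ n hn, hTa₁] at this
    exact (hη n hn).2.not_ge this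
  set K₁ := 2 * max 1 (x₀ / a₁)
  intro δ hδ
  set C := max 1 (max (x₀ / a₁) ((1 + K₂) * K₁ / δ))
  have hC1 : 1 ≤ C := le_max_left _ _
  refine ⟨C, by positivity, fun n hn => ?_⟩
  obtain ⟨m, rfl⟩ : ∃ m, n = m + 1 := ⟨n - 1, by omega⟩
  refine (measureReal_abs_recursion_gt_le hmeas hindep hident hsymm hη hTσ hX1 hXrec hσa
    (by positivity) hK₂.le
    (fun x y hx hxy hy => le_mul_div_mul_of_half (tailProb_antitone _) (tailProb_nonneg _)
      (fun s hs => (hx₀ s hs).1.2.1) hx₀pos ha₁ hx hxy hy) hmoment hC1 ?_ m).trans ?_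
  · rw [← div_le_iff₀' ha₁]
    exact (le_max_left _ _).trans (le_max_right _ _)
  · rw [div_le_iff₀ (by positivity), ← div_le_iff₀' hδ]
    exact (le_max_right _ _).trans (le_max_right _ _)

end Recursion

theorem symmetric_recursion_tight_general
    {Ω : Type*} [MeasurableSpace Ω] (P : Measure Ω) [IsProbabilityMeasure P]
    (α : ℝ) (hα : α ∈ Set.Ioo (1:ℝ) 2)
    (ε : ℕ → Ω → ℝ) (hmeas : ∀ n, Measurable (ε n))
    (hindep : iIndepFun ε P)
    (hident : ∀ n : ℕ, IdentDistrib (ε n) (ε 1) P P)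
    (hsymm : IdentDistrib (ε 1) (fun ω => -(ε 1 ω)) P P)
    (b0 : ℝ → ℝ)
    (hb0slow : ∀ x : ℝ, 0 < x → Tendsto (fun s : ℝ => b0 (s * x) / b0 s) atTop (𝓝 1))
    (htail : ∀ x : ℝ, 0 < x → (P {ω | ε 1 ω > x}).toReal = b0 x * x ^ (-α))
    (b1 : ℝ → ℝ) (hb1pos : ∀ t : ℝ, 1 ≤ t → 0 < b1 t)
    (hb1 : ∀ t : ℝ, 1 ≤ t → (P {ω | |ε 1 ω| > t ^ (1/α) * (b1 t)⁻¹}).toReal = t⁻¹)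
    (η : ℕ → ℝ)
    (hη01 : ∀ n : ℕ, 1 ≤ n → η n ∈ Set.Ioo (0:ℝ) 1)
    (X : ℕ → Ω → ℝ) (hX1 : ∀ ω, X 1 ω = 0)
    (hXrec : ∀ n : ℕ, 1 ≤ n → ∀ ω,
        X (n+1) ω = (1 - η n) * X n ω + η n ^ (1/α) * b1 ((η n)⁻¹) * ε n ω) :
    ∀ δ : ℝ, 0 < δ → ∃ C : ℝ, 0 < C ∧ ∀ n : ℕ, 1 ≤ n →
      (P {ω | |X n ω| > C}).toReal ≤ δ := by
  have hTL : ∀ x, 0 < x → tailProb P (ε 1) x = 2 * b0 x * x ^ (-α) := fun x hx => by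
    rw [tailProb_eq_two_mul (hmeas 1) hsymm hx.le, measureReal_def, htail x hx, mul_assoc]
  have hlim := tendsto_div_of_eq_mul_rpow hTL (by
    simpa only [mul_div_mul_left _ _ (two_ne_zero' ℝ)] using hb0slow 2 two_pos)
  have hinv : ∀ n, 1 ≤ n → 1 ≤ (η n)⁻¹ := fun n hn =>
    one_le_inv₀ (hη01 n hn).1 |>.2 (hη01 n hn).2.le
  have hTa₁ : tailProb P (ε 1) (b1 1)⁻¹ = 1 := by
    have := hb1 1 le_rfl
    rwa [Real.one_rpow, one_mul, inv_one] at this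
  have hTσ : ∀ n, 1 ≤ n → tailProb P (ε 1) (η n ^ (1 / α) * b1 (η n)⁻¹)⁻¹ = η n := fun n hn => by
    have := hb1 _ (hinv n hn)
    rwa [Real.inv_rpow (hη01 n hn).1.le, ← mul_inv, inv_inv] at this
  exact tight_of_tendsto_tailProb_div hmeas hindep hident hsymm hα hlim
    (inv_pos.2 (hb1pos 1 le_rfl)) hTa₁ hη01
    (fun n hn => mul_pos (Real.rpow_pos_of_pos (hη01 n hn).1 _) (hb1pos _ (hinv n hn)))
    hTσ hX1 hXrec

/-- the one-dimensional recursion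
`X̃_{n+1} = (1-η_n) X̃_n + η_n^{1/α} b1(η_n^{-1}) ε_n`, driven by symmetric i.i.d.
regularly varying noise with `P(ε > x) = b0(x) x^{-α}` and
`P(|ε| > t^{1/α} b1(t)^{-1}) = t^{-1}`, is tight. -/
theorem symmetric_recursion_tight
    {Ω : Type*} [MeasurableSpace Ω] (P : Measure Ω) [IsProbabilityMeasure P]
    (α : ℝ) (hα : α ∈ Set.Ioo (1:ℝ) 2)
    (ε : ℕ → Ω → ℝ) (hmeas : ∀ n, Measurable (ε n))
    (hindep : iIndepFun ε P)
    (hident : ∀ n : ℕ, IdentDistrib (ε n) (ε 1) P P)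
    (hsymm : IdentDistrib (ε 1) (fun ω => -(ε 1 ω)) P P)
    (b0 : ℝ → ℝ) (hb0pos : ∀ x : ℝ, 0 < x → 0 < b0 x)
    (hb0slow : ∀ x : ℝ, 0 < x → Tendsto (fun s : ℝ => b0 (s * x) / b0 s) atTop (𝓝 1))
    (htail : ∀ x : ℝ, 0 < x → (P {ω | ε 1 ω > x}).toReal = b0 x * x ^ (-α))
    (b1 : ℝ → ℝ) (hb1pos : ∀ t : ℝ, 1 ≤ t → 0 < b1 t)
    (hb1 : ∀ t : ℝ, 1 ≤ t → (P {ω | |ε 1 ω| > t ^ (1/α) * (b1 t)⁻¹}).toReal = t⁻¹)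
    (c ρ : ℝ) (hc : 0 < c) (hρ : ρ ∈ Set.Ioc (0:ℝ) 1)
    (η : ℕ → ℝ) (hη : ∀ n : ℕ, η n = c * (n:ℝ) ^ (-ρ))
    (hη01 : ∀ n : ℕ, 1 ≤ n → η n ∈ Set.Ioo (0:ℝ) 1)
    (X : ℕ → Ω → ℝ) (hX1 : ∀ ω, X 1 ω = 0)
    (hXrec : ∀ n : ℕ, 1 ≤ n → ∀ ω,
        X (n+1) ω = (1 - η n) * X n ω + η n ^ (1/α) * b1 ((η n)⁻¹) * ε n ω) :
    ∀ δ : ℝ, 0 < δ → ∃ C : ℝ, 0 < C ∧ ∀ n : ℕ, 1 ≤ n →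
      (P {ω | |X n ω| > C}).toReal ≤ δ :=
  symmetric_recursion_tight_general P α hα ε hmeas hindep hident hsymm b0 hb0slow htail b1 hb1pos
    hb1 η hη01 X hX1 hXrec
end
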